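/- arXiv:2410.12122 — 7 statements merged into one kernel-verified Lean document; each statement's English description precedes it below -/
import Mathlib

section
/- Let p₁,…,p_s be pairwise distinct odd primes and e₁,…,e_s positive integers. Then there exists an s-tuple (η₁,…,η_s) of integers such that for each i, η_i is a primitive root modulo p_i^d for every d ≥ 1, and η_i ≡ 1 (mod p_j^{e_j}) for all j ≠ i. -/
/-- An integer `η` is a primitive root modulo `N` if its residue class generates
the multiplicative group `(ZMod N)ˣ`, equivalently its multiplicative order is `φ(N)`. -/
def IsPrimitiveRootMod (η : ℤ) (N : ℕ) : Prop :=
  orderOf ((η : ZMod N)) = Nat.totient N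

/-!
A primitive root `g` modulo `p²` is a primitive root modulo every `p^d`: writing
`g^(p-1) = 1 + p a`, the fact that `g` has order `p(p-1)` modulo `p²` forces `p ∤ a`, so
`g^(p-1)` has order `p^(d-1)` modulo `p^d`, while `p - 1` divides the order of `g` modulo `p^d`.
Such a `g` exists because `(ℤ/p²ℤ)ˣ` is cyclic, and only its class modulo `p²` matters, so by the
Chinese remainder theorem it can be chosen `≡ 1` modulo the product of the other `p_j^{e_j}`.
-/

open Finset

lemma orderOf_intCast_dvd_iff {η : ℤ} {N n : ℕ} :
    orderOf (η : ZMod N) ∣ n ↔ (N : ℤ) ∣ η ^ n - 1 := by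
  rw [orderOf_dvd_iff_pow_eq_one, ← ZMod.intCast_zmod_eq_zero_iff_dvd]
  push_cast
  rw [sub_eq_zero]

lemma IsPrimitiveRootMod.of_modEq {a b : ℤ} {N : ℕ} (hab : a ≡ b [ZMOD N])
    (ha : IsPrimitiveRootMod a N) : IsPrimitiveRootMod b N := by
  rwa [IsPrimitiveRootMod, ← (ZMod.intCast_eq_intCast_iff a b N).2 hab]

lemma exists_natCast_isPrimitiveRootMod {N : ℕ} [NeZero N] (h : IsCyclic (ZMod N)ˣ) :
    ∃ g : ℕ, IsPrimitiveRootMod g N := by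
  obtain ⟨g, hg⟩ := isCyclic_iff_exists_orderOf_eq_natCard.mp h
  refine ⟨(g : ZMod N).val, ?_⟩
  rw [IsPrimitiveRootMod, Int.cast_natCast, ZMod.natCast_zmod_val, orderOf_units, hg,
    Nat.card_eq_fintype_card, ZMod.card_units_eq_totient]

section PrimePow

variable {p : ℕ} {η : ℤ}

lemma IsPrimitiveRootMod.orderOf_prime_sq (hp : p.Prime) (h : IsPrimitiveRootMod η (p ^ 2)) :
    orderOf (η : ZMod (p ^ 2)) = p * (p - 1) := by
  rw [h, Nat.totient_prime_pow_succ hp, pow_one]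

lemma IsPrimitiveRootMod.sub_one_dvd_orderOf_prime_pow (hp : p.Prime)
    (h : IsPrimitiveRootMod η (p ^ 2)) {d : ℕ} (hd : d ≠ 0) :
    p - 1 ∣ orderOf (η : ZMod (p ^ d)) := by
  set m := orderOf (η : ZMod (p ^ d))
  have hpd : ((p ^ d : ℕ) : ℤ) ∣ η ^ m - 1 := orderOf_intCast_dvd_iff.1 dvd_rfl
  have hp_dvd : (p : ℤ) ∣ η ^ m - 1 := by
    refine Dvd.dvd.trans ?_ hpd
    exact_mod_cast dvd_pow_self p hd
  have hsq_dvd : ((p ^ 2 : ℕ) : ℤ) ∣ η ^ (m * p) - 1 := by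
    simpa [pow_mul] using dvd_sub_pow_of_dvd_sub hp_dvd 1
  have hdvd : p * (p - 1) ∣ p * m := by
    rw [← h.orderOf_prime_sq hp, mul_comm p]
    exact orderOf_intCast_dvd_iff.2 hsq_dvd
  exact Nat.dvd_of_mul_dvd_mul_left hp.pos hdvd

lemma IsPrimitiveRootMod.exists_pow_sub_one_eq_mul_not_dvd (hp : p.Prime)
    (h : IsPrimitiveRootMod η (p ^ 2)) :
    ∃ a : ℤ, η ^ (p - 1) = 1 + p * a ∧ ¬ (p : ℤ) ∣ a := by
  have := Fact.mk hp
  have hunit : IsUnit (η : ZMod (p ^ 2)) :=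
    (orderOf_pos_iff.1 (h ▸ Nat.totient_pos.2 (pow_pos hp.pos 2))).isUnit
  have hne : (η : ZMod p) ≠ 0 := by
    simpa using (hunit.map (ZMod.castHom (dvd_pow_self p two_ne_zero) (ZMod p))).ne_zero
  obtain ⟨a, ha⟩ : (p : ℤ) ∣ η ^ (p - 1) - 1 := by
    simpa using orderOf_intCast_dvd_iff.1 (ZMod.orderOf_dvd_card_sub_one hne)
  refine ⟨a, by linear_combination ha, ?_⟩
  rintro ⟨b, rfl⟩
  have hsq : p * (p - 1) ∣ 1 * (p - 1) := by
    rw [one_mul, ← h.orderOf_prime_sq hp]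
    exact orderOf_intCast_dvd_iff.2 ⟨b, by push_cast; linear_combination ha⟩
  exact hp.not_dvd_one (Nat.dvd_of_mul_dvd_mul_right (Nat.sub_pos_of_lt hp.one_lt) hsq)

lemma IsPrimitiveRootMod.prime_pow_of_sq (hp : p.Prime) (hp2 : p ≠ 2)
    (h : IsPrimitiveRootMod η (p ^ 2)) {d : ℕ} (hd : d ≠ 0) : IsPrimitiveRootMod η (p ^ d) := by
  obtain ⟨n, rfl⟩ := Nat.exists_eq_succ_of_ne_zero hd
  obtain ⟨a, ha, hpa⟩ := h.exists_pow_sub_one_eq_mul_not_dvd hp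
  have hpow : orderOf ((η : ZMod (p ^ (n + 1))) ^ (p - 1)) = p ^ n := by
    rw [← Int.cast_pow, ha]
    push_cast
    exact ZMod.orderOf_one_add_mul_prime hp hp2 a hpa n
  have hdvd := h.sub_one_dvd_orderOf_prime_pow hp hd
  rw [orderOf_pow_of_dvd (Nat.sub_pos_of_lt hp.one_lt).ne' hdvd] at hpow
  rw [IsPrimitiveRootMod, Nat.totient_prime_pow_succ hp, ← hpow, Nat.div_mul_cancel hdvd]

lemma exists_isPrimitiveRootMod_prime_pow_modEq_one (hp : p.Prime) (hp2 : p ≠ 2) {M : ℕ}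
    (hM : p.Coprime M) :
    ∃ η : ℕ, (∀ d ≠ 0, IsPrimitiveRootMod η (p ^ d)) ∧ η ≡ 1 [MOD M] := by
  have : NeZero (p ^ 2) := ⟨pow_ne_zero 2 hp.ne_zero⟩
  obtain ⟨g, hg⟩ := exists_natCast_isPrimitiveRootMod (ZMod.isCyclic_units_of_prime_pow p hp hp2 2)
  obtain ⟨η, hηg, hη1⟩ := Nat.chineseRemainder (hM.pow_left 2) g 1
  have hη : IsPrimitiveRootMod η (p ^ 2) := by
    exact_mod_cast hg.of_modEq (Int.natCast_modEq_iff.2 hηg.symm)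
  exact ⟨η, fun d hd => hη.prime_pow_of_sq hp hp2 hd, hη1⟩

end PrimePow

theorem stmt5_general (s : ℕ) (p : Fin s → ℕ) (e : Fin s → ℕ)
    (hp : ∀ i, (p i).Prime) (hpodd : ∀ i, Odd (p i))
    (hdist : ∀ i j, i ≠ j → p i ≠ p j) :
    ∃ η : Fin s → ℤ,
      ∀ i, (∀ d : ℕ, 1 ≤ d → IsPrimitiveRootMod (η i) ((p i) ^ d)) ∧
        ∀ j, j ≠ i → ((p j : ℤ) ^ (e j)) ∣ (η i - 1) := by
  have hcop (i : Fin s) : (p i).Coprime (∏ j ∈ univ.erase i, p j ^ e j) :=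
    Nat.Coprime.prod_right fun j hj => Nat.Coprime.pow_right _
      ((Nat.coprime_primes (hp i) (hp j)).2 (hdist i j (ne_of_mem_erase hj).symm))
  have hp2 (i : Fin s) : p i ≠ 2 := fun h => absurd (h ▸ hpodd i) (by decide)
  choose η hη using fun i => exists_isPrimitiveRootMod_prime_pow_modEq_one (hp i) (hp2 i) (hcop i)
  refine ⟨fun i => η i, fun i => ⟨fun d hd => (hη i).1 d (by omega), fun j hj => ?_⟩⟩
  have hprod : ((∏ k ∈ univ.erase i, p k ^ e k : ℕ) : ℤ) ∣ η i - 1 := by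
    simpa using Nat.modEq_iff_dvd.1 (hη i).2.symm
  refine Dvd.dvd.trans ?_ hprod
  exact_mod_cast dvd_prod_of_mem _ (mem_erase.2 ⟨hj, mem_univ j⟩)

/-- Existence of a primitive root system: given pairwise distinct odd primes `p i` and
positive exponents `e i`, there exist integers `η i` such that each `η i` is a primitive
root modulo `(p i)^d` for every `d ≥ 1` and `η i ≡ 1 (mod (p j)^(e j))` for all `j ≠ i`. -/
theorem stmt5 (s : ℕ) (p : Fin s → ℕ) (e : Fin s → ℕ)
    (hp : ∀ i, (p i).Prime) (hpodd : ∀ i, Odd (p i))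
    (hdist : ∀ i j, i ≠ j → p i ≠ p j) (he : ∀ i, 0 < e i) :
    ∃ η : Fin s → ℤ,
      ∀ i, (∀ d : ℕ, 1 ≤ d → IsPrimitiveRootMod (η i) ((p i) ^ d)) ∧
        ∀ j, j ≠ i → ((p j : ℤ) ^ (e j)) ∣ (η i - 1) :=
  stmt5_general s p e hp hpodd hdist
end

section
/- Let q be an odd prime power, m a positive integer coprime to q, γ ∈ ℤ/mℤ, and let τ be the size of the q-cyclotomic coset of γ modulo m. If v₂(q^τ − 1) + v₂(γ) ≥ v₂(m) + 1, then the q-cyclotomic coset of γ modulo 2m also has size τ, the cosets of γ and m+γ modulo 2m are disjoint, and their union is the full preimage of the coset of γ under the reduction map ℤ/2mℤ → ℤ/mℤ. -/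
/-! Reduction `φ : ZMod (2m) → ZMod m` intertwines multiplication by `q`, its fibres are the
pairs `{x, m + x}`, and `m` is fixed by multiplication by the odd number `q`. The splitting
hypothesis says that `τ` is a period of `γ` modulo `2m`, so `γ` has the same minimal period `τ`
modulo `2m` as modulo `m`. Hence `φ` is injective on the orbit of `γ` modulo `2m`, so this orbit
misses its translate by `m`, and the two together fill the preimage of the orbit modulo `m`. -/

/-- The `q`-cyclotomic coset modulo `n` containing `γ`: the orbit of `γ` under
multiplication by `q` in `ZMod n`. -/
def cycCoset (q n : ℕ) (γ : ZMod n) : Set (ZMod n) := {x | ∃ j : ℕ, x = γ * (q : ZMod n) ^ j}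

/-- The size of the `q`-cyclotomic coset modulo `n` containing `γ`: the least `τ > 0`
with `γ q^τ = γ` in `ZMod n`. -/
noncomputable def cycSize (q n : ℕ) (γ : ZMod n) : ℕ := sInf {t | 0 < t ∧ γ * (q : ZMod n) ^ t = γ}

open Function Set

namespace Function

variable {α β : Type*} {fa : α → α} {fb : β → β} {x : α}

theorem iterate_eq_iterate_iff_modEq (hx : x ∈ periodicPts fa) {j k : ℕ} :
    fa^[j] x = fa^[k] x ↔ j ≡ k [MOD minimalPeriod fa x] := by
  have hpos := minimalPeriod_pos_of_mem_periodicPts hx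
  rw [← iterate_mod_minimalPeriod_eq (n := j), ← iterate_mod_minimalPeriod_eq (n := k),
    iterate_eq_iterate_iff_of_lt_minimalPeriod (Nat.mod_lt _ hpos) (Nat.mod_lt _ hpos)]
  rfl

theorem Semiconj.injOn_range_iterate {g : α → β} (hg : Semiconj g fa fb)
    (hx : g x ∈ periodicPts fb) (h : minimalPeriod fb (g x) = minimalPeriod fa x) :
    InjOn g (range fun n => fa^[n] x) := by
  have hx' : x ∈ periodicPts fa :=
    minimalPeriod_pos_iff_mem_periodicPts.1 (h ▸ minimalPeriod_pos_of_mem_periodicPts hx)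
  rintro _ ⟨j, rfl⟩ _ ⟨k, rfl⟩ hjk
  simp only [(hg.iterate_right _).eq] at hjk
  rw [iterate_eq_iterate_iff_modEq hx', ← h, ← iterate_eq_iterate_iff_modEq hx]
  exact hjk

end Function

namespace ZMod

theorem natCast_mul_eq_self_of_dvd {n a b : ℕ} (hb : 1 ≤ b) (h : n ∣ a * (b - 1)) :
    (a : ZMod n) * b = a := by
  have := (natCast_eq_zero_iff _ _).2 h
  push_cast [Nat.cast_sub hb] at this
  linear_combination this

theorem natCast_mul_eq_self_of_odd (m : ℕ) {b : ℕ} (hb : Odd b) :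
    (m : ZMod (2 * m)) * b = m := by
  refine natCast_mul_eq_self_of_dvd hb.pos ?_
  rw [mul_comm 2 m]
  exact mul_dvd_mul_left m (Nat.Odd.sub_odd hb odd_one).two_dvd

theorem castHom_two_mul_eq_iff {m : ℕ} [NeZero m] {x y : ZMod (2 * m)} :
    castHom (dvd_mul_left m 2) (ZMod m) x = castHom (dvd_mul_left m 2) (ZMod m) y ↔
      x = y ∨ x = m + y := by
  constructor
  · intro hxy
    have hd : ((x - y).val : ZMod m) = 0 := by
      rw [natCast_val, ← castHom_apply (h := dvd_mul_left m 2), map_sub, hxy, sub_self]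
    obtain ⟨c, hc⟩ := (natCast_eq_zero_iff _ _).1 hd
    have hc2 : c < 2 := by
      have := (x - y).val_lt
      nlinarith [NeZero.pos m]
    have hval : x - y = ((m * c : ℕ) : ZMod (2 * m)) := by rw [← hc, natCast_zmod_val]
    interval_cases c
    · left; simpa [sub_eq_zero] using hval
    · right; simp only [mul_one] at hval; linear_combination hval
  · rintro (rfl | rfl) <;> simp

theorem mem_periodicPts_mul_natCast {n q : ℕ} [NeZero n] (h : n.Coprime q) (γ : ZMod n) :
    γ ∈ periodicPts (· * (q : ZMod n)) := by
  refine mk_mem_periodicPts (Nat.totient_pos.2 (NeZero.pos n)) ?_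
  have hq : (q : ZMod n) ^ n.totient = 1 := by
    rw [← Nat.cast_pow, ← Nat.cast_one, natCast_eq_natCast_iff]
    exact Nat.ModEq.pow_totient h.symm
  rw [IsPeriodicPt, IsFixedPt, mul_right_iterate_apply, hq, mul_one]

end ZMod

theorem cycCoset_eq_range (q n : ℕ) (γ : ZMod n) :
    cycCoset q n γ = range fun j => γ * (q : ZMod n) ^ j := by
  ext x
  simp only [cycCoset, mem_ofPred_eq, mem_range, eq_comm]

theorem cycSize_eq_minimalPeriod (q n : ℕ) (γ : ZMod n) :
    cycSize q n γ = minimalPeriod (· * (q : ZMod n)) γ := by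
  simp only [cycSize, minimalPeriod_eq_sInf_n_pos_IsPeriodicPt, IsPeriodicPt, IsFixedPt,
    mul_right_iterate_apply]

theorem cycCoset_natCast_add_of_odd {q : ℕ} (hq : Odd q) (m a : ℕ) :
    cycCoset q (2 * m) ((m + a : ℕ) : ZMod (2 * m)) =
      (fun x : ZMod (2 * m) => m + x) '' cycCoset q (2 * m) (a : ZMod (2 * m)) := by
  simp only [cycCoset_eq_range, ← range_comp, comp_def, Nat.cast_add, add_mul, ← Nat.cast_pow,
    ZMod.natCast_mul_eq_self_of_odd m hq.pow]

theorem stmt6_general (q m : ℕ) (hqodd : Odd q) (hm : 0 < m)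
    (hcop : Nat.Coprime m q) (γ : ZMod m) (τ : ℕ) (hτ : τ = cycSize q m γ)
    (hsplit : 2 * m ∣ γ.val * (q ^ τ - 1)) :
    cycSize q (2 * m) ((γ.val : ZMod (2 * m))) = τ ∧
    Disjoint (cycCoset q (2 * m) (γ.val : ZMod (2 * m)))
      (cycCoset q (2 * m) ((m + γ.val : ℕ) : ZMod (2 * m))) ∧
    cycCoset q (2 * m) (γ.val : ZMod (2 * m)) ∪
        cycCoset q (2 * m) ((m + γ.val : ℕ) : ZMod (2 * m)) =
      (ZMod.castHom (dvd_mul_left m 2) (ZMod m)) ⁻¹' (cycCoset q m γ) := by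
  have : NeZero m := ⟨hm.ne'⟩
  set φ := ZMod.castHom (dvd_mul_left m 2) (ZMod m)
  have hφγ : φ γ.val = γ := by simp [φ]
  have hφ : Semiconj φ (· * (q : ZMod (2 * m))) (· * (q : ZMod m)) := fun x => by simp [φ]
  have hper : IsPeriodicPt (· * (q : ZMod (2 * m))) τ (γ.val : ZMod (2 * m)) := by
    rw [IsPeriodicPt, IsFixedPt, mul_right_iterate_apply, ← Nat.cast_pow]
    exact ZMod.natCast_mul_eq_self_of_dvd (Nat.one_le_pow _ _ hqodd.pos) hsplit
  have hsize : minimalPeriod (· * (q : ZMod (2 * m))) (γ.val : ZMod (2 * m)) = τ := by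
    refine Nat.dvd_antisymm hper.minimalPeriod_dvd ?_
    have := ((isPeriodicPt_minimalPeriod _ (γ.val : ZMod (2 * m))).map hφ).minimalPeriod_dvd
    rwa [hφγ, ← cycSize_eq_minimalPeriod, ← hτ] at this
  have hinj : InjOn φ (cycCoset q (2 * m) (γ.val : ZMod (2 * m))) := by
    simp only [cycCoset_eq_range, ← mul_right_iterate_apply]
    refine hφ.injOn_range_iterate (ZMod.mem_periodicPts_mul_natCast hcop _) ?_
    rw [hφγ, hsize, hτ, cycSize_eq_minimalPeriod]
  have hcoset : ∀ j : ℕ, φ (γ.val * (q : ZMod (2 * m)) ^ j) = γ * (q : ZMod m) ^ j := fun j => by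
    rw [map_mul, map_pow, hφγ, map_natCast]
  rw [cycCoset_natCast_add_of_odd hqodd, cycSize_eq_minimalPeriod]
  refine ⟨hsize, ?_, ?_⟩
  · rw [disjoint_left]
    rintro _ hz ⟨w, hw, rfl⟩
    have : (m : ZMod (2 * m)) + w = w := hinj hz hw (ZMod.castHom_two_mul_eq_iff.2 (.inr rfl))
    have hm0 : (m : ZMod (2 * m)) = 0 := by linear_combination this
    rw [ZMod.natCast_eq_zero_iff] at hm0
    have := Nat.le_of_dvd hm hm0
    omega
  · ext x
    simp only [cycCoset_eq_range, mem_union, mem_image, mem_preimage, mem_range,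
      exists_exists_eq_and, ← hcoset, ← exists_or]
    refine exists_congr fun j => ?_
    rw [eq_comm (a := φ _), ZMod.castHom_two_mul_eq_iff]
    exact or_congr eq_comm eq_comm

/-- Splitting case: if `q` is an odd prime power, `m` is coprime to `q`, `τ` is the size of the
`q`-cyclotomic coset of `γ` modulo `m`, and `2m ∣ γ(q^τ - 1)` (i.e.
`v₂(q^τ - 1) + v₂(γ) ≥ v₂(m) + 1`), then the coset of `γ` modulo `2m` also has size `τ`,
the cosets of `γ` and `m + γ` modulo `2m` are disjoint, and their union is the full preimage
of the coset of `γ` under reduction `ZMod (2m) → ZMod m`. -/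
theorem stmt6 (q m : ℕ) (hq : IsPrimePow q) (hqodd : Odd q) (hm : 0 < m)
    (hcop : Nat.Coprime m q) (γ : ZMod m) (τ : ℕ) (hτ : τ = cycSize q m γ)
    (hsplit : 2 * m ∣ γ.val * (q ^ τ - 1)) :
    cycSize q (2 * m) ((γ.val : ZMod (2 * m))) = τ ∧
    Disjoint (cycCoset q (2 * m) (γ.val : ZMod (2 * m)))
      (cycCoset q (2 * m) ((m + γ.val : ℕ) : ZMod (2 * m))) ∧
    cycCoset q (2 * m) (γ.val : ZMod (2 * m)) ∪
        cycCoset q (2 * m) ((m + γ.val : ℕ) : ZMod (2 * m)) =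
      (ZMod.castHom (dvd_mul_left m 2) (ZMod m)) ⁻¹' (cycCoset q m γ) :=
  stmt6_general q m hqodd hm hcop γ τ hτ hsplit
end

section
/- Let q be an odd prime power, m a positive integer coprime to q, γ ∈ ℤ/mℤ, and let τ be the size of the q-cyclotomic coset of γ modulo m. If v₂(q^τ − 1) + v₂(γ) < v₂(m) + 1, then the q-cyclotomic coset of γ modulo 2m has size 2τ, contains m+γ, and equals the full preimage of the coset of γ under the reduction map ℤ/2mℤ → ℤ/mℤ. -/
private lemma memIff (q n : ℕ) [NeZero n] (γ : ZMod n) (t : ℕ) :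
    γ * (q : ZMod n) ^ t = γ ↔ (n : ℤ) ∣ (γ.val : ℤ) * ((q : ℤ) ^ t - 1) := by
  rw [← ZMod.intCast_zmod_eq_zero_iff_dvd]
  push_cast
  rw [ZMod.natCast_val, ZMod.cast_id, mul_sub, mul_one, sub_eq_zero]

private lemma cycSizeSpec (q n : ℕ) (γ : ZMod n) (t₀ : ℕ) (ht₀ : 0 < t₀)
    (h : γ * (q : ZMod n) ^ t₀ = γ) :
    0 < cycSize q n γ ∧ γ * (q : ZMod n) ^ (cycSize q n γ) = γ ∧
      ∀ t : ℕ, γ * (q : ZMod n) ^ t = γ → cycSize q n γ ∣ t := by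
  have hne : {t | 0 < t ∧ γ * (q : ZMod n) ^ t = γ}.Nonempty := ⟨t₀, ht₀, h⟩
  have hspec : 0 < cycSize q n γ ∧ γ * (q : ZMod n) ^ (cycSize q n γ) = γ :=
    Nat.sInf_mem hne
  obtain ⟨hpos, hper⟩ := hspec
  set s := cycSize q n γ with hs
  have hmul : ∀ k, γ * (q : ZMod n) ^ (s * k) = γ := by
    intro k
    induction k with
    | zero => simp
    | succ k ih => rw [Nat.mul_succ, pow_add, ← mul_assoc, ih, hper]
  refine ⟨hpos, hper, fun t ht => ?_⟩
  have hr : γ * (q : ZMod n) ^ (t % s) = γ := by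
    calc γ * (q : ZMod n) ^ (t % s)
        = γ * (q : ZMod n) ^ (s * (t / s)) * (q : ZMod n) ^ (t % s) := by rw [hmul]
      _ = γ * (q : ZMod n) ^ (s * (t / s) + t % s) := by rw [pow_add, mul_assoc]
      _ = γ := by rw [Nat.div_add_mod]; exact ht
  have h0 : t % s = 0 := by
    by_contra h0
    have hle : s ≤ t % s :=
      Nat.sInf_le (show t % s ∈ {u | 0 < u ∧ γ * (q : ZMod n) ^ u = γ} from
        ⟨Nat.pos_of_ne_zero h0, hr⟩)
    exact absurd hle (not_le.mpr (Nat.mod_lt t hpos))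
  exact Nat.dvd_of_mod_eq_zero h0

private lemma oddGeomSum {x : ℤ} (hx : Odd x) {k : ℕ} (hk : Odd k) :
    Odd (∑ i ∈ Finset.range k, x ^ i) := by
  rw [Int.odd_iff]
  rw [Finset.sum_int_mod]
  have : ∀ i ∈ Finset.range k, x ^ i % 2 = 1 := fun i _ => Int.odd_iff.mp (hx.pow)
  rw [Finset.sum_congr rfl this, Finset.sum_const, Finset.card_range, nsmul_eq_mul, mul_one]
  have : (k : ℤ) % 2 = 1 := by
    have := Nat.odd_iff.mp hk
    omega
  omega

/-- Nonsplitting case: if `q` is an odd prime power, `m` is coprime to `q`, `τ` is the size of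
the `q`-cyclotomic coset of `γ` modulo `m`, and `2m ∤ γ(q^τ - 1)` (i.e.
`v₂(q^τ - 1) + v₂(γ) < v₂(m) + 1`), then the coset of `γ` modulo `2m` has size `2τ`,
contains `m + γ`, and equals the full preimage of the coset of `γ` under the reduction
`ZMod (2m) → ZMod m`. -/
theorem stmt7 (q m : ℕ) (hq : IsPrimePow q) (hqodd : Odd q) (hm : 0 < m)
    (hcop : Nat.Coprime m q) (γ : ZMod m) (τ : ℕ) (hτ : τ = cycSize q m γ)
    (hns : ¬ (2 * m ∣ γ.val * (q ^ τ - 1))) :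
    cycSize q (2 * m) ((γ.val : ZMod (2 * m))) = 2 * τ ∧
    ((m + γ.val : ℕ) : ZMod (2 * m)) ∈ cycCoset q (2 * m) (γ.val : ZMod (2 * m)) ∧
    cycCoset q (2 * m) (γ.val : ZMod (2 * m)) =
      (ZMod.castHom (dvd_mul_left m 2) (ZMod m)) ⁻¹' (cycCoset q m γ) := by
  haveI : NeZero m := ⟨hm.ne'⟩
  haveI : NeZero (2 * m) := ⟨by omega⟩
  have hq2 : 2 ≤ q := hq.two_le
  have hqpow1 : ∀ t : ℕ, 1 ≤ q ^ t := fun t => Nat.one_le_pow _ _ (by omega)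
  set a : ℕ := γ.val with ha
  have haval : ((a : ZMod (2 * m))).val = a :=
    ZMod.val_natCast_of_lt (lt_of_lt_of_le (ZMod.val_lt γ) (by omega))
  have hqZodd : Odd (q : ℤ) := (Int.odd_coe_nat q).mpr hqodd
  -- τ spec at level m
  obtain ⟨hτpos, hτper, hτdvd⟩ : 0 < τ ∧ γ * (q : ZMod m) ^ τ = γ ∧
      ∀ t : ℕ, γ * (q : ZMod m) ^ t = γ → τ ∣ t := by
    rw [hτ]
    set u := ZMod.unitOfCoprime q hcop.symm with hu
    have hd : 0 < orderOf u := orderOf_pos u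
    have hud : γ * (q : ZMod m) ^ (orderOf u) = γ := by
      have h1 : ((u ^ (orderOf u) : (ZMod m)ˣ) : ZMod m) = 1 := by
        rw [pow_orderOf_eq_one]; rfl
      rw [Units.val_pow_eq_pow_val] at h1
      rw [show ((u : ZMod m)) = (q : ZMod m) from ZMod.coe_unitOfCoprime q hcop.symm] at h1
      rw [h1, mul_one]
    exact cycSizeSpec q m γ (orderOf u) hd hud
  -- translate hns to ℤ
  have hnsZ : ¬ ((2 * m : ℤ) ∣ (a : ℤ) * ((q : ℤ) ^ τ - 1)) := by
    intro hdvd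
    apply hns
    have h1 : ((2 * m : ℕ) : ℤ) ∣ ((a * (q ^ τ - 1) : ℕ) : ℤ) := by
      push_cast [Nat.cast_sub (hqpow1 τ)]
      convert hdvd using 2 <;> push_cast <;> ring
    exact_mod_cast h1
  -- m ∣ a (q^τ - 1), with odd cofactor c
  have hmτ : (m : ℤ) ∣ (a : ℤ) * ((q : ℤ) ^ τ - 1) := (memIff q m γ τ).mp hτper
  obtain ⟨c, hc⟩ := hmτ
  have hcodd : Odd c := by
    rcases Int.even_or_odd c with he | ho
    · obtain ⟨c', hc'⟩ := he
      exact absurd ⟨c', by rw [hc, hc']; push_cast; ring⟩ hnsZ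
    · exact ho
  -- key: a * q^τ = m + a in ZMod (2m)
  have hkey : ((a : ZMod (2 * m))) * (q : ZMod (2 * m)) ^ τ = ((m + a : ℕ) : ZMod (2 * m)) := by
    obtain ⟨w', hw'⟩ := hcodd
    have h2 : ((((a : ℤ) * (q : ℤ) ^ τ - ((m : ℤ) + a)) : ℤ) : ZMod (2 * m)) = 0 := by
      rw [ZMod.intCast_zmod_eq_zero_iff_dvd]
      exact ⟨w', by push_cast; linear_combination hc + (m : ℤ) * hw'⟩
    push_cast at h2 ⊢
    linear_combination h2
  -- 2τ is a period mod 2m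
  have hper2 : ((a : ZMod (2 * m))) * (q : ZMod (2 * m)) ^ (2 * τ) = (a : ZMod (2 * m)) := by
    rw [memIff, haval]
    obtain ⟨w, hw⟩ : Even ((q : ℤ) ^ τ + 1) := (hqZodd.pow).add_one
    refine ⟨c * w, ?_⟩
    push_cast
    rw [two_mul, pow_add]
    linear_combination ((q : ℤ) ^ τ + 1) * hc + (m : ℤ) * c * hw
  -- spec at level 2m
  obtain ⟨hspos, hsper, hsdvd⟩ := cycSizeSpec q (2 * m) (a : ZMod (2 * m)) (2 * τ)
    (by omega) hper2
  set s := cycSize q (2 * m) (a : ZMod (2 * m)) with hs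
  have hs2τ : s ∣ 2 * τ := hsdvd (2 * τ) hper2
  -- τ ∣ s
  have hsdvd2m : (2 * (m : ℤ)) ∣ (a : ℤ) * ((q : ℤ) ^ s - 1) := by
    have := (memIff q (2 * m) (a : ZMod (2 * m)) s).mp hsper
    rw [haval] at this
    exact_mod_cast this
  have hτs : τ ∣ s := by
    apply hτdvd
    rw [memIff, ← ha]
    exact dvd_trans (dvd_mul_left (m : ℤ) 2) hsdvd2m
  obtain ⟨k, hk⟩ := hτs
  have hkeven : Even k := by
    by_contra hke
    rw [Nat.not_even_iff_odd] at hke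
    have hdvd : (2 * (m : ℤ)) ∣ (a : ℤ) * ((q : ℤ) ^ (τ * k) - 1) := by
      rw [← hk]; exact hsdvd2m
    have hfac : (q : ℤ) ^ (τ * k) - 1 =
        (∑ i ∈ Finset.range k, ((q : ℤ) ^ τ) ^ i) * ((q : ℤ) ^ τ - 1) := by
      rw [pow_mul]; exact (geom_sum_mul _ k).symm
    set S := ∑ i ∈ Finset.range k, ((q : ℤ) ^ τ) ^ i with hS
    have hSodd : Odd S := oddGeomSum hqZodd.pow hke
    have heq : (a : ℤ) * ((q : ℤ) ^ (τ * k) - 1) = (m : ℤ) * (c * S) := by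
      rw [hfac]; linear_combination S * hc
    rw [heq] at hdvd
    obtain ⟨e, he⟩ := hdvd
    have hm0 : (m : ℤ) ≠ 0 := by exact_mod_cast hm.ne'
    have h2cS : c * S = 2 * e := by
      apply mul_left_cancel₀ hm0; linarith [he]
    have : Odd (c * S) := hcodd.mul hSodd
    rw [Int.odd_iff] at this
    omega
  obtain ⟨k', hk'⟩ := hkeven
  have hfinal : s = 2 * τ := by
    apply Nat.dvd_antisymm hs2τ
    exact ⟨k', by rw [hk, hk']; ring⟩
  refine ⟨hfinal, ⟨τ, hkey.symm⟩, ?_⟩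
  -- the preimage claim
  ext x
  constructor
  · rintro ⟨j, hj⟩
    refine ⟨j, ?_⟩
    rw [hj]
    rw [map_mul, map_pow, map_natCast, map_natCast]
    rw [ha, ZMod.natCast_val, ZMod.cast_id]
  · rintro ⟨j, hj⟩
    have hcastx : ((x.val : ℕ) : ZMod m) = ((a * q ^ j : ℕ) : ZMod m) := by
      have h1 : (ZMod.castHom (dvd_mul_left m 2) (ZMod m)) x = ((x.val : ℕ) : ZMod m) := by
        rw [ZMod.castHom_apply, ZMod.natCast_val]
      rw [h1] at hj
      rw [hj]
      push_cast
      rw [ha, ZMod.natCast_val, ZMod.cast_id]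
    have hmdvd : (m : ℤ) ∣ ((x.val : ℤ) - (a : ℤ) * (q : ℤ) ^ j) := by
      have := (ZMod.natCast_eq_natCast_iff _ _ _).mp hcastx
      have h2 := (Nat.modEq_iff_dvd).mp this.symm
      push_cast at h2 ⊢
      convert h2 using 1
    obtain ⟨e, he⟩ := hmdvd
    have hxval : ((x.val : ℕ) : ZMod (2 * m)) = x := by
      rw [ZMod.natCast_val, ZMod.cast_id]
    rcases Int.even_or_odd e with heo | heo
    · obtain ⟨f, hf⟩ := heo
      refine ⟨j, ?_⟩
      have h2 : ((((x.val : ℤ) - (a : ℤ) * (q : ℤ) ^ j) : ℤ) : ZMod (2 * m)) = 0 := by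
        rw [ZMod.intCast_zmod_eq_zero_iff_dvd]
        exact ⟨f, by push_cast; rw [he, hf]; ring⟩
      push_cast at h2
      rw [hxval] at h2
      rw [sub_eq_zero] at h2
      exact h2
    · refine ⟨j + τ, ?_⟩
      obtain ⟨g, hg⟩ := heo.sub_odd ((hqZodd.pow).mul hcodd)
      have h2 : ((((x.val : ℤ) - (a : ℤ) * (q : ℤ) ^ (j + τ)) : ℤ) : ZMod (2 * m)) = 0 := by
        rw [ZMod.intCast_zmod_eq_zero_iff_dvd]
        refine ⟨g, ?_⟩
        push_cast
        rw [pow_add]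
        linear_combination he - (q : ℤ) ^ j * hc + (m : ℤ) * hg
      push_cast at h2
      rw [hxval] at h2
      rw [sub_eq_zero] at h2
      exact h2
end

section
/- Let q be a prime power, p₁,…,p_s distinct odd primes not dividing q, e₁,…,e_s positive integers, and n = p₁^{e₁}···p_s^{e_s}. Then the number of q-cyclotomic cosets modulo n equals the sum over all tuples (y₁,…,y_s) with 0 ≤ y_i ≤ e_i of φ(p₁^{e₁−y₁})···φ(p_s^{e_s−y_s}) / lcm(f_{1,y₁},…,f_{s,y_s}), where f_{i,y_i} is the multiplicative order of q modulo p_i^{e_i−y_i}. -/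
/-!
Multiplication by `q` is an automorphism of the additive group `ZMod n`, so it preserves additive
orders, and the coset of an element of additive order `d` is an orbit of size `ord_d(q)`, the order
of `q` modulo `d`. As `ZMod n` has `φ(d)` elements of order `d` for every `d ∣ n`, there are
`∑_{d ∣ n} φ(d) / ord_d(q)` cosets. Writing `d = ∏ pᵢ ^ (eᵢ - yᵢ)`, the Chinese remainder theorem
turns `φ(d)` into a product and `ord_d(q)` into the lcm of the orders modulo the prime powers.
-/

open Finset Function MulAction Subgroup

namespace MulAction

variable {G α : Type*} [Group G] [MulAction G α]

theorem card_orbits_eq_card_orbitRel_quotient :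
    Nat.card {S : Set α // ∃ x, S = orbit G x} = Nat.card (orbitRel.Quotient G α) := by
  rw [← Nat.card_range_of_injective orbitRel.Quotient.orbit_injective]
  refine Nat.card_congr (Equiv.subtypeEquivRight fun S => ?_)
  rw [Set.mem_range, Quotient.exists]
  simp only [orbitRel.Quotient.orbit_mk, eq_comm]

theorem card_filter_quotient_mk_eq [Fintype α] [DecidableEq (orbitRel.Quotient G α)]
    (ω : orbitRel.Quotient G α) :
    #{x | (⟦x⟧ : orbitRel.Quotient G α) = ω} = Nat.card (orbit G ω.out) := by
  classical
  rw [← orbitRel.Quotient.orbit_eq_orbit_out _ Quotient.out_eq', Nat.card_eq_card_toFinset]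
  congr 1
  ext x
  simp [orbitRel.Quotient.mem_orbit]

theorem card_orbitRel_quotient_eq_sum_div [Fintype α] {β : Type*} [DecidableEq β]
    (f : α → β) (hf : ∀ (g : G) x, f (g • x) = f x) (c : β → ℕ)
    (hc : ∀ x, Nat.card (orbit G x) = c (f x)) (t : Finset β) (ht : ∀ x, f x ∈ t) :
    Nat.card (orbitRel.Quotient G α) = ∑ b ∈ t, #{x | f x = b} / c b := by
  classical
  have : Fintype (orbitRel.Quotient G α) := Fintype.ofFinite _
  let F : orbitRel.Quotient G α → β := Quotient.lift f fun x y ⟨g, hg⟩ => hg ▸ hf g y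
  have hF : ∀ ω, F ω = f ω.out := fun ω => by
    conv_lhs => rw [← Quotient.out_eq' ω]
    rfl
  have hcount : ∀ b, #{x | f x = b} = #{ω | F ω = b} * c b := by
    intro b
    rw [card_eq_sum_card_fiberwise (f := fun x => (⟦x⟧ : orbitRel.Quotient G α))
      (t := {ω | F ω = b}) (fun x hx => by simpa [F] using hx), ← smul_eq_mul, ← sum_const]
    refine sum_congr rfl fun ω hω => ?_
    have hωb : F ω = b := (mem_filter.1 hω).2
    rw [← hωb, hF, ← hc, ← card_filter_quotient_mk_eq, filter_filter]
    congr 1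
    ext x
    simp only [mem_filter, mem_univ, true_and, and_iff_right_iff_imp]
    rintro rfl
    exact hF ⟦x⟧
  rw [Nat.card_eq_fintype_card, ← card_univ,
    card_eq_sum_card_fiberwise (f := F) (t := t) fun ω _ => hF ω ▸ ht _]
  refine sum_congr rfl fun b _ => ?_
  rw [hcount]
  rcases (filter (fun ω => F ω = b) univ).eq_empty_or_nonempty with h | ⟨ω, hω⟩
  · simp [h]
  · have hb : c b ≠ 0 := by
      rw [mem_filter, hF] at hω
      rw [← hω.2, ← hc]
      exact Nat.card_ne_zero.2 ⟨⟨_, mem_orbit_self _⟩, Set.toFinite _⟩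
    rw [Nat.mul_div_cancel _ (Nat.pos_of_ne_zero hb)]

end MulAction

namespace Nat

variable {ι : Type*} [Fintype ι]

theorem totient_prod_of_pairwise_coprime (a : ι → ℕ) (ha : ∀ i, a i ≠ 0)
    (h : Pairwise (Coprime on a)) : φ (∏ i, a i) = ∏ i, φ (a i) := by
  have (i : ι) : NeZero (a i) := ⟨ha i⟩
  have : NeZero (∏ i, a i) := ⟨prod_ne_zero_iff.2 fun i _ => ha i⟩
  simp only [← ZMod.card_units_eq_totient, Fintype.card_eq_nat_card]
  rw [Nat.card_congr
    ((Units.mapEquiv (ZMod.prodEquivPi a h).toMulEquiv).trans MulEquiv.piUnits).toEquiv, Nat.card_pi]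

theorem orderOf_natCast_zmod_prod (q : ℕ) (a : ι → ℕ) (h : Pairwise (Coprime on a)) :
    orderOf (q : ZMod (∏ i, a i)) = univ.lcm fun i => orderOf (q : ZMod (a i)) := by
  rw [← (ZMod.prodEquivPi a h).toMulEquiv.orderOf_eq, Pi.orderOf]
  simp

variable {p : ι → ℕ}

theorem factorization_prod_pow (hp : ∀ i, (p i).Prime) (k : ι → ℕ) :
    (∏ i, p i ^ k i).factorization = ∑ i, Finsupp.single (p i) (k i) := by
  rw [factorization_prod fun i _ => pow_ne_zero _ (hp i).ne_zero]
  simp only [(hp _).factorization_pow]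

theorem factorization_prod_pow_apply (hp : ∀ i, (p i).Prime) (hinj : Injective p) (k : ι → ℕ)
    (j : ι) : (∏ i, p i ^ k i).factorization (p j) = k j := by
  classical
  simp [factorization_prod_pow hp, Finsupp.single_apply, hinj.eq_iff]

theorem prod_pow_factorization_of_dvd (hp : ∀ i, (p i).Prime) (hinj : Injective p) {e : ι → ℕ}
    {d : ℕ} (hd : d ∣ ∏ i, p i ^ e i) : ∏ i, p i ^ d.factorization (p i) = d := by
  classical
  have hN : ∏ i, p i ^ e i ≠ 0 := prod_ne_zero_iff.2 fun i _ => pow_ne_zero _ (hp i).ne_zero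
  have hd0 : d ≠ 0 := ne_zero_of_dvd_ne_zero hN hd
  have hsupp : d.factorization.support ⊆ univ.image p := by
    refine (Finsupp.support_mono ((factorization_le_iff_dvd hd0 hN).2 hd)).trans ?_
    rw [factorization_prod_pow hp]
    refine Finsupp.support_finsetSum.trans (biUnion_subset.2 fun i _ => ?_)
    exact Finsupp.support_single_subset.trans
      (singleton_subset_iff.2 (mem_image_of_mem p (mem_univ i)))
  conv_rhs => rw [← prod_factorization_pow_eq_self hd0]
  rw [Finsupp.prod_of_support_subset _ hsupp _ fun _ _ => pow_zero _, prod_image hinj.injOn]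

theorem factorization_le_of_dvd_prod_pow (hp : ∀ i, (p i).Prime) (hinj : Injective p)
    {e : ι → ℕ} {d : ℕ} (hd : d ∈ (∏ i, p i ^ e i).divisors) (i : ι) :
    d.factorization (p i) ≤ e i := by
  rw [← factorization_prod_pow_apply hp hinj e i]
  exact (factorization_le_iff_dvd (pos_of_mem_divisors hd).ne' (mem_divisors.1 hd).2).2
    (dvd_of_mem_divisors hd) (p i)

theorem sum_divisors_prod_pow [DecidableEq ι] {M : Type*} [AddCommMonoid M]
    (hp : ∀ i, (p i).Prime) (hinj : Injective p) (e : ι → ℕ) (g : ℕ → M) :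
    ∑ d ∈ (∏ i, p i ^ e i).divisors, g d = ∑ k : ∀ i, Fin (e i + 1), g (∏ i, p i ^ (k i : ℕ)) := by
  symm
  refine sum_nbij (fun k => ∏ i, p i ^ (k i : ℕ)) (fun k _ => ?_) (fun k _ k' _ hkk' => ?_)
    (fun d hd => ?_) fun _ _ => rfl
  · exact mem_divisors.2
      ⟨prod_dvd_prod_of_dvd _ _ fun i _ => pow_dvd_pow _ (le_of_lt_succ (k i).2),
        prod_ne_zero_iff.2 fun i _ => pow_ne_zero _ (hp i).ne_zero⟩
  · funext i
    have := congrArg (fun m => m.factorization (p i)) hkk'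
    simp only [factorization_prod_pow_apply hp hinj] at this
    exact Fin.ext this
  · refine ⟨fun i => ⟨d.factorization (p i), ?_⟩, mem_coe.2 (mem_univ _),
      prod_pow_factorization_of_dvd hp hinj (dvd_of_mem_divisors hd)⟩
    exact lt_succ_of_le (factorization_le_of_dvd_prod_pow hp hinj hd i)

end Nat

section Ring

variable {R : Type*} [Ring R]

theorem natCast_pow_mul_eq_self_iff (q k : ℕ) (x : R) :
    (q : R) ^ k * x = x ↔ (q : ZMod (addOrderOf x)) ^ k = 1 := by
  rw [← Nat.cast_pow, ← nsmul_eq_mul, ← Nat.cast_pow, ← Nat.cast_one, ZMod.natCast_eq_natCast_iff,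
    ← nsmul_eq_nsmul_iff_modEq, one_nsmul]

theorem minimalPeriod_units_smul (u : Rˣ) {q : ℕ} (hu : (u : R) = q) (x : R) :
    minimalPeriod (u • ·) x = orderOf (q : ZMod (addOrderOf x)) := by
  refine Nat.dvd_right_iff_eq.1 fun k => ?_
  rw [← isPeriodicPt_iff_minimalPeriod_dvd, orderOf_dvd_iff_pow_eq_one,
    ← natCast_pow_mul_eq_self_iff, IsPeriodicPt, IsFixedPt, smul_iterate_apply, Units.smul_def,
    Units.val_pow_eq_pow_val, hu, smul_eq_mul]

theorem card_orbit_zpowers_units [Finite R] (u : Rˣ) {q : ℕ} (hu : (u : R) = q) (x : R) :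
    Nat.card (orbit (zpowers u) x) = orderOf (q : ZMod (addOrderOf x)) := by
  have := Fintype.ofFinite R
  classical
  rw [Nat.card_eq_fintype_card, ← minimalPeriod_eq_card, minimalPeriod_units_smul u hu]

end Ring

namespace ZMod

variable {q n : ℕ}

theorem cycCoset_eq_orbit (hq : q.Coprime n) (γ : ZMod n) :
    cycCoset q n γ = orbit (zpowers (unitOfCoprime q hq)) γ := by
  ext x
  simp only [cycCoset, Set.mem_ofPred_eq, mem_orbit_iff, Subtype.exists,
    ← mem_powers_iff_mem_zpowers, Submonoid.mem_powers_iff, mk_smul, Units.smul_def, smul_eq_mul,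
    mul_comm, eq_comm, exists_prop, existsAndEq, Units.val_pow_eq_pow_val, coe_unitOfCoprime,
    true_and]

theorem card_cycCosets_eq_sum_divisors [NeZero n] (hq : q.Coprime n) :
    Nat.card {S : Set (ZMod n) // ∃ γ, S = cycCoset q n γ} =
      ∑ d ∈ n.divisors, d.totient / orderOf (q : ZMod d) := by
  simp only [cycCoset_eq_orbit hq]
  rw [card_orbits_eq_card_orbitRel_quotient,
    card_orbitRel_quotient_eq_sum_div addOrderOf
      (fun g x => (DistribMulAction.toAddEquiv (ZMod n) g).addOrderOf_eq x)
      (fun d => orderOf (q : ZMod d)) (card_orbit_zpowers_units _ (coe_unitOfCoprime q hq))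
      n.divisors fun x => Nat.mem_divisors.2 ⟨?_, NeZero.ne n⟩]
  · refine sum_congr rfl fun d hd => ?_
    rw [IsAddCyclic.card_addOrderOf_eq_totient (by rw [card]; exact Nat.dvd_of_mem_divisors hd)]
  · simpa using addOrderOf_dvd_card (x := x)

end ZMod

theorem stmt10_general (q : ℕ) (s : ℕ) (p e : Fin s → ℕ)
    (hp : ∀ i, (p i).Prime) (hpq : ∀ i, ¬ (p i ∣ q))
    (hdist : ∀ i j, i ≠ j → p i ≠ p j)
    (n : ℕ) (hn : n = ∏ i, (p i) ^ (e i)) :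
    Nat.card {S : Set (ZMod n) // ∃ γ : ZMod n, S = cycCoset q n γ} =
      ∑ y ∈ (Finset.univ : Finset (∀ i : Fin s, Fin (e i + 1))),
        (∏ i, Nat.totient ((p i) ^ (e i - (y i : ℕ)))) /
          (Finset.univ.lcm fun i => orderOf ((q : ZMod ((p i) ^ (e i - (y i : ℕ)))))) := by
  subst hn
  have hinj : Injective p := fun i j h => by_contra fun hij => hdist i j hij h
  have hcop (k : Fin s → ℕ) : Pairwise (Nat.Coprime on fun i => p i ^ k i) := fun i j hij =>
    Nat.Coprime.pow _ _ ((Nat.coprime_primes (hp i) (hp j)).2 (hdist i j hij))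
  have hq : q.Coprime (∏ i, p i ^ e i) :=
    Nat.Coprime.prod_right fun i _ =>
      ((Nat.Prime.coprime_iff_not_dvd (hp i)).2 (hpq i)).symm.pow_right _
  have : NeZero (∏ i, p i ^ e i) := ⟨prod_ne_zero_iff.2 fun i _ => pow_ne_zero _ (hp i).ne_zero⟩
  rw [ZMod.card_cycCosets_eq_sum_divisors hq, Nat.sum_divisors_prod_pow hp hinj,
    ← (Equiv.piCongrRight fun i => Fin.revPerm).sum_comp]
  refine sum_congr rfl fun y _ => ?_
  have hrev (i : Fin s) : (Fin.revPerm (y i) : ℕ) = e i - y i := by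
    rw [Fin.revPerm_apply, Fin.val_rev, Nat.add_sub_add_right]
  rw [Nat.totient_prod_of_pairwise_coprime _ (fun i => pow_ne_zero _ (hp i).ne_zero) (hcop _),
    Nat.orderOf_natCast_zmod_prod _ _ (hcop _)]
  congr 1
  · exact prod_congr rfl fun i _ => by rw [Equiv.piCongrRight_apply, Pi.map_apply, hrev]
  · exact lcm_congr rfl fun i _ => by rw [Equiv.piCongrRight_apply, Pi.map_apply, hrev]

/-- Counting `q`-cyclotomic cosets modulo `n = p₁^{e₁} ⋯ p_s^{e_s}`: their number equals
`∑_{0 ≤ y_i ≤ e_i} φ(p₁^{e₁-y₁}) ⋯ φ(p_s^{e_s-y_s}) / lcm(f_{1,y₁}, …, f_{s,y_s})`,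
where `f_{i,y_i}` is the multiplicative order of `q` modulo `p_i^{e_i - y_i}`. -/
theorem stmt10 (q : ℕ) (hq : IsPrimePow q) (s : ℕ) (p e : Fin s → ℕ)
    (hp : ∀ i, (p i).Prime) (hpodd : ∀ i, Odd (p i)) (hpq : ∀ i, ¬ (p i ∣ q))
    (hdist : ∀ i j, i ≠ j → p i ≠ p j) (he : ∀ i, 0 < e i)
    (n : ℕ) (hn : n = ∏ i, (p i) ^ (e i)) :
    Nat.card {S : Set (ZMod n) // ∃ γ : ZMod n, S = cycCoset q n γ} =
      ∑ y ∈ (Finset.univ : Finset (∀ i : Fin s, Fin (e i + 1))),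
        (∏ i, Nat.totient ((p i) ^ (e i - (y i : ℕ)))) /
          (Finset.univ.lcm fun i => orderOf ((q : ZMod ((p i) ^ (e i - (y i : ℕ)))))) :=
  stmt10_general q s p e hp hpq hdist n hn
end

section
/- Let q be a prime power, n = p₁^{e₁}···p_s^{e_s} an odd integer coprime to q with distinct odd primes p_i, and γ ∈ ℤ/nℤ with gcd(γ, n) = p₁^{y₁}···p_s^{y_s}. Then the size of the q-cyclotomic coset of γ modulo n equals ω · p₁^{M₁}···p_s^{M_s}, where m_i = min{e_i−y_i, 1}, ω = lcm over i of the multiplicative order of q modulo p_i^{m_i}, and M_i = max{e_i − y_i − v_{p_i}(q^ω − 1), 0}. -/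
lemma ord_dvd_iff (q N t : ℕ) (hq : 1 ≤ q) :
    orderOf ((q : ZMod N)) ∣ t ↔ N ∣ q ^ t - 1 := by
  rw [orderOf_dvd_iff_pow_eq_one, ← Nat.cast_pow, ← Nat.cast_one (R := ZMod N),
    ZMod.natCast_eq_natCast_iff]
  constructor
  · intro h
    exact (Nat.modEq_iff_dvd' (Nat.one_le_pow _ _ hq)).mp h.symm
  · intro h
    exact ((Nat.modEq_iff_dvd' (Nat.one_le_pow _ _ hq)).mpr h).symm

lemma ord_pos (q N : ℕ) (hN : 0 < N) (hcop : Nat.Coprime q N) :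
    0 < orderOf ((q : ZMod N)) := by
  rw [orderOf_pos_iff, isOfFinOrder_iff_pow_eq_one]
  refine ⟨N.totient, Nat.totient_pos.mpr hN, ?_⟩
  rw [← Nat.cast_pow, ← Nat.cast_one (R := ZMod N), ZMod.natCast_eq_natCast_iff]
  exact Nat.ModEq.pow_totient hcop

lemma ordP_not_dvd {p q : ℕ} (hp : p.Prime) (hpq : ¬ p ∣ q) (hq : 2 ≤ q) :
    ¬ p ∣ orderOf ((q : ZMod (p ^ 1))) := by
  have hcop : Nat.Coprime q (p ^ 1) := ((hp.coprime_iff_not_dvd).mpr hpq).symm.pow_right _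
  have hpos : 0 < orderOf ((q : ZMod (p ^ 1))) := ord_pos q _ (pow_pos hp.pos 1) hcop
  have h1 : orderOf ((q : ZMod (p ^ 1))) ∣ (p ^ 1).totient := by
    rw [ord_dvd_iff q _ _ (by omega)]
    exact (Nat.modEq_iff_dvd' (Nat.one_le_pow _ _ (by omega))).mp
      (Nat.ModEq.pow_totient hcop).symm
  rw [show (p ^ 1).totient = p - 1 by rw [pow_one, Nat.totient_prime hp]] at h1
  intro hcontra
  have hp2 := hp.two_le
  have h2 := Nat.le_of_dvd hpos hcontra
  have h3 := Nat.le_of_dvd (by omega) h1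
  omega

lemma ordP_dvd {p : ℕ} (q : ℕ) (hq : 1 ≤ q) :
    p ∣ q ^ orderOf ((q : ZMod (p ^ 1))) - 1 := by
  exact dvd_trans (dvd_pow_self p one_ne_zero) ((ord_dvd_iff q (p ^ 1) _ hq).mp dvd_rfl)

lemma pow_sub_one_dvd_pow_sub_one (q x y : ℕ) (h : x ∣ y) : q ^ x - 1 ∣ q ^ y - 1 := by
  obtain ⟨k, rfl⟩ := h
  rw [pow_mul]
  simpa using Nat.sub_dvd_pow_sub_pow (q ^ x) 1 k

lemma keyB {p : ℕ} (q d t : ℕ) (hp : p.Prime) (hpodd : Odd p) (hpq : ¬ p ∣ q) (hq : 2 ≤ q)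
    (hpd : p ∣ q ^ d - 1) (hd : 0 < d) (hdp : ¬ p ∣ d) (hdt : d ∣ t) (ht : 0 < t) :
    padicValNat p (q ^ t - 1) = padicValNat p (q ^ d - 1) + padicValNat p t := by
  haveI : Fact p.Prime := ⟨hp⟩
  obtain ⟨k, rfl⟩ := hdt
  have hk : k ≠ 0 := by rintro rfl; simp at ht
  have h1 : (1 : ℕ) < q ^ d := Nat.one_lt_pow hd.ne' hq
  have hx : ¬ p ∣ q ^ d := fun h => hpq (hp.dvd_of_dvd_pow h)
  have key := padicValNat.pow_sub_pow (p := p) (x := q ^ d) (y := 1) hpodd h1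
    (by simpa using hpd) hx hk
  rw [pow_mul, padicValNat.mul (by omega) hk, padicValNat.eq_zero_of_not_dvd hdp]
  simpa using key

lemma keyC {p : ℕ} (q f t : ℕ) (hp : p.Prime) (hpodd : Odd p) (hpq : ¬ p ∣ q) (hq : 2 ≤ q)
    (hf : 1 ≤ f) (ht : 0 < t) :
    p ^ f ∣ q ^ t - 1 ↔
      orderOf ((q : ZMod (p ^ 1))) ∣ t ∧
        f ≤ padicValNat p (q ^ orderOf ((q : ZMod (p ^ 1))) - 1) + padicValNat p t := by
  haveI : Fact p.Prime := ⟨hp⟩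
  set d := orderOf ((q : ZMod (p ^ 1))) with hd
  have hq1 : (1 : ℕ) ≤ q := by omega
  have hcop : Nat.Coprime q (p ^ 1) := ((hp.coprime_iff_not_dvd).mpr hpq).symm.pow_right _
  have hdpos : 0 < d := ord_pos q _ (pow_pos hp.pos 1) hcop
  have hpd : p ∣ q ^ d - 1 := ordP_dvd q hq1
  have hdp : ¬ p ∣ d := ordP_not_dvd hp hpq hq
  have hqt : q ^ t - 1 ≠ 0 := by
    have := Nat.one_lt_pow ht.ne' hq; omega
  constructor
  · intro h
    have hp1t : p ^ 1 ∣ q ^ t - 1 := (pow_dvd_pow p hf).trans h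
    have hdt : d ∣ t := (ord_dvd_iff q (p ^ 1) t hq1).mpr hp1t
    refine ⟨hdt, ?_⟩
    have h2 := (Nat.Prime.pow_dvd_iff_le_factorization hp hqt).mp h
    rwa [Nat.factorization_def _ hp, keyB q d t hp hpodd hpq hq hpd hdpos hdp hdt ht] at h2
  · rintro ⟨hdt, hle⟩
    rw [Nat.Prime.pow_dvd_iff_le_factorization hp hqt, Nat.factorization_def _ hp,
      keyB q d t hp hpodd hpq hq hpd hdpos hdp hdt ht]
    exact hle

lemma nat_prod_dvd {ι : Type*} (t : Finset ι) (F : ι → ℕ) (a : ℕ)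
    (hcop : ∀ i ∈ t, ∀ j ∈ t, i ≠ j → Nat.Coprime (F i) (F j))
    (hdvd : ∀ i ∈ t, F i ∣ a) : (∏ i ∈ t, F i) ∣ a := by
  classical
  induction t using Finset.induction_on with
  | empty => simpa using one_dvd a
  | @insert i s hi ih =>
    rw [Finset.prod_insert hi]
    refine Nat.Coprime.mul_dvd_of_dvd_of_dvd ?_ (hdvd i (by simp)) ?_
    · exact Nat.Coprime.prod_right fun j hj =>
        hcop i (by simp) j (by simp [hj]) (by rintro rfl; exact hi hj)
    · exact ih (fun i hi' j hj' hij => hcop i (by simp [hi']) j (by simp [hj']) hij)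
        (fun i hi' => hdvd i (by simp [hi']))




/-- Size of a `q`-cyclotomic coset modulo an odd `n = p₁^{e₁} ⋯ p_s^{e_s}`: if
`gcd(γ, n) = p₁^{y₁} ⋯ p_s^{y_s}` then the size equals `ω · p₁^{M₁} ⋯ p_s^{M_s}` where
`m_i = min{e_i - y_i, 1}`, `ω = lcm_i ord_{p_i^{m_i}}(q)` and
`M_i = max{e_i - y_i - v_{p_i}(q^ω - 1), 0}`. -/
theorem stmt11 (q : ℕ) (hq : IsPrimePow q) (hqodd : Odd q)
    (s : ℕ) (p e : Fin s → ℕ)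
    (hp : ∀ i, (p i).Prime) (hpodd : ∀ i, Odd (p i)) (hpq : ∀ i, ¬ (p i ∣ q))
    (hdist : ∀ i j, i ≠ j → p i ≠ p j) (he : ∀ i, 0 < e i)
    (n : ℕ) (hn : n = ∏ i, (p i) ^ (e i)) (hcop : Nat.Coprime n q)
    (γ : ZMod n) (y : Fin s → ℕ) (hy : ∀ i, y i ≤ e i)
    (hgcd : Nat.gcd γ.val n = ∏ i, (p i) ^ (y i)) :
    cycSize q n γ =
      (Finset.univ.lcm fun i => orderOf ((q : ZMod ((p i) ^ (min (e i - y i) 1))))) *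
        ∏ i, (p i) ^
          (e i - y i - padicValNat (p i)
            (q ^ (Finset.univ.lcm fun j =>
              orderOf ((q : ZMod ((p j) ^ (min (e j - y j) 1))))) - 1)) := by
  classical
  have hq2 : 2 ≤ q := hq.two_le
  have hq1 : (1 : ℕ) ≤ q := by omega
  have hnpos : 0 < n := by
    rw [hn]; exact Finset.prod_pos fun i _ => pow_pos (hp i).pos _
  haveI : NeZero n := ⟨hnpos.ne'⟩
  set ω := Finset.univ.lcm fun i => orderOf ((q : ZMod ((p i) ^ (min (e i - y i) 1)))) with hω
  -- basic facts about the local orders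
  have hdpos : ∀ i, 0 < orderOf ((q : ZMod ((p i) ^ (min (e i - y i) 1)))) := fun i =>
    ord_pos q _ (pow_pos (hp i).pos _) (((hp i).coprime_iff_not_dvd.mpr (hpq i)).symm.pow_right _)
  have hωne : ω ≠ 0 := by
    rw [hω, Ne, Finset.lcm_eq_zero_iff]
    rintro ⟨i, -, h0⟩
    exact (hdpos i).ne' h0
  have hωpos : 0 < ω := Nat.pos_of_ne_zero hωne
  have hd1 : ∀ i, 1 ≤ e i - y i →
      orderOf ((q : ZMod ((p i) ^ (min (e i - y i) 1)))) = orderOf ((q : ZMod ((p i) ^ 1))) := by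
    intro i h1
    rw [show min (e i - y i) 1 = 1 by omega]
  have hd0 : ∀ i, e i - y i = 0 →
      orderOf ((q : ZMod ((p i) ^ (min (e i - y i) 1)))) = 1 := by
    intro i h0
    rw [show min (e i - y i) 1 = 0 by omega, pow_zero]
    exact orderOf_eq_one_iff.mpr (Subsingleton.elim _ _)
  have hDω : ∀ i, 1 ≤ e i - y i → orderOf ((q : ZMod ((p i) ^ 1))) ∣ ω := by
    intro i h1
    rw [← hd1 i h1, hω]
    exact Finset.dvd_lcm (Finset.mem_univ i)
  have hDpos : ∀ i, 0 < orderOf ((q : ZMod ((p i) ^ 1))) := fun i =>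
    ord_pos q _ (pow_pos (hp i).pos _) (((hp i).coprime_iff_not_dvd.mpr (hpq i)).symm.pow_right _)
  -- the reduced modulus
  set n' := ∏ i, (p i) ^ (e i - y i) with hn'
  have hn'pos : 0 < n' := Finset.prod_pos fun i _ => pow_pos (hp i).pos _
  have hgn : n = Nat.gcd γ.val n * n' := by
    rw [hgcd, hn', ← Finset.prod_mul_distrib, hn]
    refine Finset.prod_congr rfl fun i _ => ?_
    rw [← pow_add]
    congr 1
    have := hy i; omega
  -- the basic equivalence
  have hiff : ∀ t : ℕ, (γ * (q : ZMod n) ^ t = γ ↔ n' ∣ q ^ t - 1) := by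
    intro t
    have h1 : γ = ((γ.val : ℕ) : ZMod n) := (ZMod.natCast_rightInverse γ).symm
    obtain ⟨a, ha⟩ : ∃ a, γ.val = a := ⟨_, rfl⟩
    obtain ⟨g, hgdef⟩ : ∃ g, Nat.gcd a n = g := ⟨_, rfl⟩
    have hgpos : 0 < g := by rw [← hgdef]; exact Nat.gcd_pos_of_pos_right _ hnpos
    have hgn2 : n = g * n' := by rw [← hgdef, ← ha]; exact hgn
    have hdvd_ag : g ∣ a := by rw [← hgdef]; exact Nat.gcd_dvd_left _ _
    have hval : g * (a / g) = a := Nat.mul_div_cancel' hdvd_ag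
    have hcop' : Nat.Coprime (a / g) n' := by
      have h2 := Nat.coprime_div_gcd_div_gcd (show 0 < Nat.gcd a n by rw [hgdef]; exact hgpos)
      rw [hgdef] at h2
      rw [show n / g = n' from by rw [hgn2]; exact Nat.mul_div_cancel_left _ hgpos] at h2
      exact h2
    have hle : a ≤ a * q ^ t := Nat.le_mul_of_pos_right _ (pow_pos (show 0 < q by omega) t)
    have hms : a * q ^ t - a = a * (q ^ t - 1) := by rw [Nat.mul_sub, mul_one]
    have key : γ * (q : ZMod n) ^ t = γ ↔ n ∣ a * (q ^ t - 1) := by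
      conv_lhs => rw [h1, ha]
      rw [← Nat.cast_pow, ← Nat.cast_mul, ZMod.natCast_eq_natCast_iff]
      constructor
      · intro h
        have h2 := (Nat.modEq_iff_dvd' hle).mp h.symm
        rwa [hms] at h2
      · intro h
        rw [← hms] at h
        exact ((Nat.modEq_iff_dvd' hle).mpr h).symm
    rw [key, hgn2]
    constructor
    · intro h
      rw [← hval, mul_assoc] at h
      have h2 := (Nat.mul_dvd_mul_iff_left hgpos).mp h
      exact hcop'.symm.dvd_of_dvd_mul_left h2
    · intro h
      have hcalc : g * (q ^ t - 1) * (a / g) = a * (q ^ t - 1) := by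
        rw [mul_right_comm, hval]
      calc g * n' ∣ g * (q ^ t - 1) * (a / g) :=
            Dvd.dvd.mul_right (mul_dvd_mul_left g h) _
        _ = a * (q ^ t - 1) := hcalc
  -- splitting over the primes
  have hprodiff : ∀ t : ℕ, (n' ∣ q ^ t - 1 ↔ ∀ i, (p i) ^ (e i - y i) ∣ q ^ t - 1) := by
    intro t
    constructor
    · intro h i
      exact (Finset.dvd_prod_of_mem _ (Finset.mem_univ i)).trans h
    · intro h
      rw [hn']
      exact nat_prod_dvd _ _ _
        (fun i _ j _ hij => ((Nat.coprime_primes (hp i) (hp j)).mpr (hdist i j hij)).pow _ _)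
        (fun i _ => h i)
  set T := ω * ∏ i, (p i) ^ (e i - y i - padicValNat (p i) (q ^ ω - 1)) with hT
  have hprodne : (∏ i, (p i) ^ (e i - y i - padicValNat (p i) (q ^ ω - 1))) ≠ 0 :=
    Finset.prod_ne_zero_iff.mpr fun i _ => pow_ne_zero _ (hp i).pos.ne'
  have hTne : T ≠ 0 := mul_ne_zero hωne hprodne
  have hTpos : 0 < T := Nat.pos_of_ne_zero hTne
  -- the lifting-the-exponent valuation identity
  have hV : ∀ i, 1 ≤ e i - y i →
      padicValNat (p i) (q ^ ω - 1) =
        padicValNat (p i) (q ^ orderOf ((q : ZMod ((p i) ^ 1))) - 1) + padicValNat (p i) ω := by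
    intro i h1
    exact keyB q _ ω (hp i) (hpodd i) (hpq i) hq2 (ordP_dvd q hq1) (hDpos i)
      (ordP_not_dvd (hp i) (hpq i) hq2) (hDω i h1) hωpos
  -- membership: n' ∣ q ^ T - 1
  have hmemT : n' ∣ q ^ T - 1 := by
    rw [hprodiff]
    intro i
    by_cases hfi : 1 ≤ e i - y i
    · have hsub : ω * (p i) ^ (e i - y i - padicValNat (p i) (q ^ ω - 1)) ∣ T := by
        rw [hT]; exact mul_dvd_mul_left ω (Finset.dvd_prod_of_mem _ (Finset.mem_univ i))
      refine dvd_trans ?_ (pow_sub_one_dvd_pow_sub_one q _ _ hsub)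
      have hpos' : 0 < ω * (p i) ^ (e i - y i - padicValNat (p i) (q ^ ω - 1)) :=
        Nat.mul_pos hωpos (pow_pos (hp i).pos _)
      rw [keyC q _ _ (hp i) (hpodd i) (hpq i) hq2 hfi hpos']
      refine ⟨(hDω i hfi).trans (dvd_mul_right ω _), ?_⟩
      haveI : Fact (p i).Prime := ⟨hp i⟩
      rw [padicValNat.mul hωne (pow_ne_zero _ (hp i).pos.ne'), padicValNat.prime_pow]
      have hVi := hV i hfi
      omega
    · have h0 : e i - y i = 0 := by omega
      simp [h0]
  -- minimality
  have hmin : ∀ t, 0 < t → n' ∣ q ^ t - 1 → T ∣ t := by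
    intro t ht h
    have hdvdall := (hprodiff t).mp h
    have hωt : ω ∣ t := by
      rw [hω]
      refine Finset.lcm_dvd fun i _ => ?_
      by_cases hfi : 1 ≤ e i - y i
      · rw [hd1 i hfi]
        exact ((keyC q _ t (hp i) (hpodd i) (hpq i) hq2 hfi ht).mp (hdvdall i)).1
      · rw [hd0 i (by omega)]; exact one_dvd t
    have hωfact := (Nat.factorization_le_iff_dvd hωne ht.ne').mpr hωt
    rw [← Nat.factorization_le_iff_dvd hTne ht.ne', Finsupp.le_def]
    intro r
    have hTfact : T.factorization r =
        ω.factorization r + ∑ j, ((p j) ^ (e j - y j - padicValNat (p j) (q ^ ω - 1))).factorization r := by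
      rw [hT, Nat.factorization_mul hωne hprodne,
        Nat.factorization_prod (fun j _ => pow_ne_zero _ (hp j).pos.ne'),
        Finsupp.add_apply, Finsupp.finset_sum_apply]
    rw [hTfact]
    have hωr : ω.factorization r ≤ t.factorization r := hωfact r
    by_cases hr : ∃ i, r = p i
    · obtain ⟨i, rfl⟩ := hr
      have hsum : ∑ j, ((p j) ^ (e j - y j - padicValNat (p j) (q ^ ω - 1))).factorization (p i)
          = e i - y i - padicValNat (p i) (q ^ ω - 1) := by
        rw [Finset.sum_eq_single i]
        · rw [(hp i).factorization_pow, Finsupp.single_apply, if_pos rfl]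
        · intro j _ hji
          rw [(hp j).factorization_pow, Finsupp.single_apply, if_neg (hdist j i hji)]
        · simp
      rw [hsum]
      by_cases hfi : 1 ≤ e i - y i
      · have hkey := ((keyC q _ t (hp i) (hpodd i) (hpq i) hq2 hfi ht).mp (hdvdall i)).2
        have hVi := hV i hfi
        have hωdef : ω.factorization (p i) = padicValNat (p i) ω :=
          Nat.factorization_def _ (hp i)
        have htdef : t.factorization (p i) = padicValNat (p i) t :=
          Nat.factorization_def _ (hp i)
        rw [hωdef] at hωr ⊢
        rw [htdef] at hωr ⊢
        omega
      · have h0 : e i - y i = 0 := by omega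
        rw [h0]
        simpa using hωr
    · have hsum : ∑ j, ((p j) ^ (e j - y j - padicValNat (p j) (q ^ ω - 1))).factorization r = 0 := by
        refine Finset.sum_eq_zero fun j _ => ?_
        rw [(hp j).factorization_pow, Finsupp.single_apply,
          if_neg (fun hc => hr ⟨j, hc.symm⟩)]
      rw [hsum]
      simpa using hωr
  -- conclude
  have hTmem : T ∈ {t : ℕ | 0 < t ∧ γ * (q : ZMod n) ^ t = γ} := ⟨hTpos, (hiff T).mpr hmemT⟩
  have hInf := Nat.sInf_mem (⟨T, hTmem⟩ : {t : ℕ | 0 < t ∧ γ * (q : ZMod n) ^ t = γ}.Nonempty)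
  unfold cycSize
  exact le_antisymm (Nat.sInf_le hTmem)
    (Nat.le_of_dvd hInf.1 (hmin _ hInf.1 ((hiff _).mp hInf.2)))
end

section
/- Let q = 2^e, and let n be an odd integer coprime to q whose prime factorization is p₁^{e₁}···p_s^{e_s}. Let γ ∈ ℤ/nℤ and let {i₁,…,i_r} be the set of indices i with p_i^{e_i} not dividing gcd(γ,n) (i.e., p_i divides n_γ = n/gcd(γ,n)). Then the q-cyclotomic coset of γ modulo n satisfies c(γ) = c(−γ) if and only if v₂(ord_{p_{i₁}}(q)) = ⋯ = v₂(ord_{p_{i_r}}(q)) > 0. -/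

lemma auxA {p a : ℕ} (hp : p.Prime) (hodd : Odd p) (ha : 0 < a)
    (x : ZMod (p^a)) (h : x^2 = 1) : x = 1 ∨ x = -1 := by
  haveI : NeZero (p^a) := ⟨pow_ne_zero _ hp.pos.ne'⟩
  have hx : ((x.val : ℤ) : ZMod (p^a)) = x := by
    simp [ZMod.natCast_val, ZMod.cast_id]
  set v : ℤ := (x.val : ℤ) with hv
  have hdvd : ((p:ℤ)^a) ∣ (v - 1) * (v + 1) := by
    have h2 : (((v - 1) * (v + 1) : ℤ) : ZMod (p^a)) = 0 := by
      push_cast [hx]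
      linear_combination h
    rwa [ZMod.intCast_zmod_eq_zero_iff_dvd, Nat.cast_pow] at h2
  have hpZ : Prime (p : ℤ) := Nat.prime_iff_prime_int.1 hp
  have hnot2 : ¬ ((p:ℤ) ∣ 2) := by
    intro h2
    have h2' : p ∣ 2 := by exact_mod_cast h2
    have := (Nat.prime_dvd_prime_iff_eq hp Nat.prime_two).1 h2'
    rw [this] at hodd
    simp [Nat.odd_iff] at hodd
  have key : ((p:ℤ)^a) ∣ (v - 1) ∨ ((p:ℤ)^a) ∣ (v + 1) := by
    by_cases h1 : (p:ℤ) ∣ (v - 1)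
    · left
      have h2 : ¬ (p:ℤ) ∣ (v + 1) := fun h2 =>
        hnot2 (by have := dvd_sub h2 h1; simpa using this)
      have hcop : IsCoprime ((p:ℤ)^a) (v + 1) :=
        IsCoprime.pow_left ((hpZ.coprime_iff_not_dvd).2 h2)
      exact hcop.dvd_of_dvd_mul_right hdvd
    · right
      have hcop : IsCoprime ((p:ℤ)^a) (v - 1) :=
        IsCoprime.pow_left ((hpZ.coprime_iff_not_dvd).2 h1)
      exact hcop.dvd_of_dvd_mul_left hdvd
  rcases key with hk | hk
  · left
    have h3 : ((v - 1 : ℤ) : ZMod (p^a)) = 0 := by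
      rw [ZMod.intCast_zmod_eq_zero_iff_dvd]; exact_mod_cast hk
    push_cast [hx] at h3
    linear_combination h3
  · right
    have h3 : ((v + 1 : ℤ) : ZMod (p^a)) = 0 := by
      rw [ZMod.intCast_zmod_eq_zero_iff_dvd]; exact_mod_cast hk
    push_cast [hx] at h3
    linear_combination h3


lemma auxB {p a : ℕ} (hp : p.Prime) (hodd : Odd p) (ha : 0 < a)
    (q j : ℕ) :
    ((q : ZMod (p^a))^j = -1) ↔
      (orderOf (q : ZMod (p^a)) ∣ 2*j ∧ ¬ orderOf (q : ZMod (p^a)) ∣ j) := by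
  have hne : (1 : ZMod (p^a)) ≠ -1 := by
    intro h1
    have h2 : ((2:ℕ) : ZMod (p^a)) = 0 := by
      push_cast
      linear_combination h1
    rw [ZMod.natCast_eq_zero_iff] at h2
    have := (Nat.le_of_dvd (by norm_num) h2)
    have h3 : p ≤ p ^ a := Nat.le_self_pow ha.ne' p
    have := hp.two_le
    have hodd' := Nat.odd_iff.1 hodd
    omega
  constructor
  · intro h
    constructor
    · rw [orderOf_dvd_iff_pow_eq_one, pow_mul', h]
      ring
    · rw [orderOf_dvd_iff_pow_eq_one, h]
      exact fun h1 => hne h1.symm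
  · rintro ⟨h1, h2⟩
    rw [orderOf_dvd_iff_pow_eq_one] at h1 h2
    have hsq : ((q : ZMod (p^a))^j)^2 = 1 := by
      rw [← pow_mul, mul_comm]; exact h1
    rcases auxA hp hodd ha _ hsq with h | h
    · exact absurd h h2
    · exact h

lemma auxC {p a : ℕ} (hp : p.Prime) (hodd : Odd p) (ha : 0 < a)
    {q : ℕ} (hq : Nat.Coprime q p) :
    padicValNat 2 (orderOf (q : ZMod (p^a))) = padicValNat 2 (orderOf (q : ZMod p)) := by
  haveI : Fact p.Prime := ⟨hp⟩
  haveI : NeZero (p^a) := ⟨pow_ne_zero _ hp.pos.ne'⟩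
  -- units
  have hqa : Nat.Coprime q (p^a) := hq.pow_right a
  set t1 := orderOf (q : ZMod (p^a)) with ht1
  set t0 := orderOf (q : ZMod p) with ht0
  have ht1pos : 0 < t1 := by
    rw [ht1, ← ZMod.coe_unitOfCoprime q hqa, orderOf_units]
    exact orderOf_pos _
  have ht0pos : 0 < t0 := by
    rw [ht0, ← ZMod.coe_unitOfCoprime q hq, orderOf_units]
    exact orderOf_pos _
  -- t0 ∣ t1 via cast hom
  have hdvd1 : t0 ∣ t1 := by
    rw [ht0, orderOf_dvd_iff_pow_eq_one]
    have hmap : (ZMod.castHom (dvd_pow_self p ha.ne') (ZMod p)) ((q : ZMod (p^a))^t1) = 1 := by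
      rw [pow_orderOf_eq_one, map_one]
    rw [map_pow, map_natCast] at hmap
    exact hmap
  -- t1 ∣ t0 * p^(a-1)
  have hdvd2 : t1 ∣ t0 * p^(a-1) := by
    rw [ht1, orderOf_dvd_iff_pow_eq_one]
    have h1 : (p:ℤ) ∣ (q:ℤ)^t0 - 1 := by
      have : ((q : ZMod p))^t0 = 1 := pow_orderOf_eq_one _
      have h2 : (((q:ℤ)^t0 - 1 : ℤ) : ZMod p) = 0 := by push_cast; linear_combination this
      rwa [ZMod.intCast_zmod_eq_zero_iff_dvd] at h2
    have h3 := dvd_sub_pow_of_dvd_sub h1 (a-1)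
    rw [one_pow] at h3
    have h4 : ((p:ℤ)^a) ∣ ((q:ℤ)^t0)^(p^(a-1)) - 1 := by
      have : a - 1 + 1 = a := by omega
      rwa [this] at h3
    have h5 : ((((q:ℤ)^t0)^(p^(a-1)) - 1 : ℤ) : ZMod (p^a)) = 0 := by
      rw [ZMod.intCast_zmod_eq_zero_iff_dvd]
      exact_mod_cast h4
    push_cast at h5
    rw [pow_mul]
    linear_combination h5
  -- conclude on valuations
  have hfle : ∀ {m k : ℕ}, 0 < m → 0 < k → m ∣ k → padicValNat 2 m ≤ padicValNat 2 k := by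
    intro m k hm hk hmk
    rw [← Nat.factorization_def m Nat.prime_two, ← Nat.factorization_def k Nat.prime_two]
    exact (Nat.factorization_le_iff_dvd hm.ne' hk.ne').2 hmk 2
  have hle1 : padicValNat 2 t0 ≤ padicValNat 2 t1 := hfle ht0pos ht1pos hdvd1
  have hle2 : padicValNat 2 t1 ≤ padicValNat 2 t0 := by
    have h6 : padicValNat 2 t1 ≤ padicValNat 2 (t0 * p^(a-1)) :=
      hfle ht1pos (Nat.mul_pos ht0pos (pow_pos hp.pos _)) hdvd2
    have hz : padicValNat 2 (p^(a-1)) = 0 :=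
      padicValNat.eq_zero_of_not_dvd (fun hcon => by
        have h7 : (2:ℕ) ∣ p := Nat.prime_two.dvd_of_dvd_pow hcon
        have h8 := Nat.odd_iff.1 hodd
        omega)
    rwa [padicValNat.mul ht0pos.ne' (pow_pos hp.pos _).ne', hz, add_zero] at h6
  omega

lemma v2_le_of_dvd {m k : ℕ} (hm : m ≠ 0) (hk : k ≠ 0) (h : m ∣ k) :
    padicValNat 2 m ≤ padicValNat 2 k := by
  rw [← Nat.factorization_def m Nat.prime_two, ← Nat.factorization_def k Nat.prime_two]
  exact (Nat.factorization_le_iff_dvd hm hk).2 h 2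

lemma dvd_of_dvd_two_mul {t j : ℕ} (ht : t ≠ 0) (hj : j ≠ 0) (h : t ∣ 2*j)
    (hv : padicValNat 2 t ≤ padicValNat 2 j) : t ∣ j := by
  rw [← Nat.factorization_le_iff_dvd ht hj, Finsupp.le_iff]
  intro ℓ hℓ
  have hℓp : ℓ.Prime := Nat.prime_of_mem_primeFactors (by rwa [Nat.support_factorization] at hℓ)
  by_cases h2 : ℓ = 2
  · subst h2
    rw [Nat.factorization_def _ Nat.prime_two, Nat.factorization_def _ Nat.prime_two]
    exact hv
  · have := (Nat.factorization_le_iff_dvd ht (by positivity)).2 h ℓ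
    rw [Nat.factorization_mul (by norm_num) hj, Finsupp.add_apply] at this
    have h0 : (Nat.factorization 2) ℓ = 0 := by
      rw [Nat.Prime.factorization Nat.prime_two, Finsupp.single_apply,
        if_neg (fun hc => h2 hc.symm)]
    omega

lemma auxD {ι : Type*} (S : Finset ι) (t : ι → ℕ) (ht : ∀ i ∈ S, 0 < t i) :
    (∃ j : ℕ, ∀ i ∈ S, t i ∣ 2*j ∧ ¬ t i ∣ j) ↔
    ∃ v, 0 < v ∧ ∀ i ∈ S, padicValNat 2 (t i) = v := by
  constructor
  · intro ⟨j, hj⟩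
    rcases S.eq_empty_or_nonempty with rfl | ⟨i0, hi0⟩
    · exact ⟨1, one_pos, fun i hi => absurd hi (by simp)⟩
    · have hj0 : j ≠ 0 := by
        rintro rfl
        exact (hj i0 hi0).2 (dvd_zero _)
      refine ⟨padicValNat 2 j + 1, Nat.succ_pos _, fun i hi => ?_⟩
      have hti : t i ≠ 0 := (ht i hi).ne'
      have hub : padicValNat 2 (t i) ≤ padicValNat 2 j + 1 := by
        have := v2_le_of_dvd hti (by omega) (hj i hi).1
        rwa [padicValNat.mul (by norm_num) hj0, padicValNat.self one_lt_two,
          add_comm] at this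
      have hlb : ¬ padicValNat 2 (t i) ≤ padicValNat 2 j := fun hc =>
        (hj i hi).2 (dvd_of_dvd_two_mul hti hj0 (hj i hi).1 hc)
      omega
  · intro ⟨v, hv, hall⟩
    set P := ∏ i ∈ S, ordCompl[2] (t i) with hP
    have hPpos : 0 < P := Finset.prod_pos (fun i hi => Nat.ordCompl_pos 2 (ht i hi).ne')
    have hPodd : ¬ (2 ∣ P) := by
      intro hc
      rcases (Nat.prime_iff.1 Nat.prime_two).dvd_finset_prod_iff _ |>.1 hc with ⟨i, hi, hdvd⟩
      exact Nat.not_dvd_ordCompl Nat.prime_two (ht i hi).ne' hdvd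
    refine ⟨2^(v-1) * P, fun i hi => ?_⟩
    have hfe : (t i).factorization 2 = v := by
      rw [Nat.factorization_def _ Nat.prime_two]; exact hall i hi
    have hdecomp : 2^v * ordCompl[2] (t i) = t i := by
      rw [← hfe]; exact Nat.ordProj_mul_ordCompl_eq_self (t i) 2
    constructor
    · have h2j : 2 * (2^(v-1) * P) = 2^v * P := by
        rw [← mul_assoc, ← pow_succ']
        congr 2
        omega
      rw [h2j, ← hdecomp]
      exact Nat.mul_dvd_mul_left _ (Finset.dvd_prod_of_mem _ hi)
    · intro hc
      rw [← hdecomp] at hc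
      have h1 : 2^v ∣ 2^(v-1) * P := dvd_trans (Dvd.intro _ rfl) hc
      have h2 : 2^(v-1) * 2 ∣ 2^(v-1) * P := by
        rw [← pow_succ]
        have : v - 1 + 1 = v := by omega
        rwa [this]
      exact hPodd ((Nat.mul_dvd_mul_iff_left (pow_pos two_pos (v-1))).1 h2)
lemma coset_iff (q n : ℕ) (γ : ZMod n) :
    cycCoset q n γ = cycCoset q n (-γ) ↔ ∃ j : ℕ, -γ = γ * (q : ZMod n)^j := by
  constructor
  · intro h
    have hmem : -γ ∈ cycCoset q n (-γ) := ⟨0, by simp⟩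
    rw [← h] at hmem
    exact hmem
  · rintro ⟨j, hj⟩
    ext x
    constructor
    · rintro ⟨k, hk⟩
      refine ⟨j + k, ?_⟩
      have hγ2 : (-γ) * (q : ZMod n)^j = γ := by rw [neg_mul, ← hj, neg_neg]
      rw [pow_add, ← mul_assoc, hγ2, ← hk]
    · rintro ⟨k, hk⟩
      refine ⟨j + k, ?_⟩
      rw [pow_add, ← mul_assoc, ← hj, ← hk]

/-- Self-reciprocity criterion: for `q = 2^e` and odd `n = p₁^{e₁} ⋯ p_s^{e_s}`, the
`q`-cyclotomic coset of `γ` modulo `n` satisfies `c(γ) = c(-γ)` if and only if the 2-adic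
valuations of the orders `ord_{p_i}(q)`, over the indices `i` with `p_i^{e_i} ∤ gcd(γ, n)`,
are all equal and positive. -/
theorem stmt16 (e : ℕ) (he : 0 < e) (q : ℕ) (hq : q = 2 ^ e)
    (s : ℕ) (p E : Fin s → ℕ)
    (hp : ∀ i, (p i).Prime) (hpodd : ∀ i, Odd (p i))
    (hdist : ∀ i j, i ≠ j → p i ≠ p j) (hE : ∀ i, 0 < E i)
    (n : ℕ) (hn : n = ∏ i, (p i) ^ (E i)) (γ : ZMod n) :
    cycCoset q n γ = cycCoset q n (-γ) ↔
      ∃ v : ℕ, 0 < v ∧ ∀ i : Fin s, ¬ ((p i) ^ (E i) ∣ Nat.gcd γ.val n) →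
        padicValNat 2 (orderOf ((q : ZMod (p i)))) = v := by
  have hn0 : n ≠ 0 := by
    rw [hn]
    exact (Finset.prod_pos (fun i _ => pow_pos (hp i).pos _)).ne'
  haveI : NeZero n := ⟨hn0⟩
  have hq0 : q ≠ 0 := by rw [hq]; positivity
  have hqcop : ∀ i, Nat.Coprime q (p i) := by
    intro i
    rw [hq]
    refine Nat.Coprime.pow_left _ ?_
    rw [Nat.prime_two.coprime_iff_not_dvd]
    intro hdvd
    have := Nat.odd_iff.1 (hpodd i)
    omega
  rw [coset_iff]
  by_cases hγ : γ = 0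
  · subst hγ
    constructor
    · intro _
      refine ⟨1, one_pos, fun i hi => absurd ?_ hi⟩
      rw [ZMod.val_zero, Nat.gcd_zero_left]
      rw [hn]
      exact Finset.dvd_prod_of_mem _ (Finset.mem_univ i)
    · intro _
      exact ⟨0, by simp⟩
  · -- setup
    set g := γ.val with hgdef
    have hg : g ≠ 0 := fun hc => hγ ((ZMod.val_eq_zero γ).1 hc)
    set b : Fin s → ℕ := fun i => g.factorization (p i) with hb
    set a : Fin s → ℕ := fun i => E i - b i with ha
    set t : Fin s → ℕ := fun i => orderOf (q : ZMod (p i ^ a i)) with htdef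
    set S : Finset (Fin s) :=
      Finset.univ.filter (fun i => ¬ (p i) ^ (E i) ∣ Nat.gcd g n) with hS
    have hbi : ∀ i, b i = g.factorization (p i) := fun _ => rfl
    have hai : ∀ i, a i = E i - b i := fun _ => rfl
    have hmemS : ∀ i, i ∈ S ↔ ¬ (p i) ^ (E i) ∣ Nat.gcd g n := by
      intro i; simp [hS]
    -- factorization of n
    have nfact : ∀ i, n.factorization (p i) = E i := by
      intro i
      rw [hn, Nat.factorization_prod (fun j _ => (pow_pos (hp j).pos _).ne')]
      rw [Finset.sum_apply']
      rw [Finset.sum_eq_single i]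
      · rw [(hp i).factorization_pow, Finsupp.single_apply, if_pos rfl]
      · intro j _ hji
        rw [(hp j).factorization_pow, Finsupp.single_apply, if_neg (hdist j i hji)]
      · intro h; exact absurd (Finset.mem_univ i) h
    -- membership criterion
    have hcrit : ∀ i, (¬ (p i) ^ (E i) ∣ Nat.gcd g n) ↔ 0 < a i := by
      intro i
      have hgcd0 : Nat.gcd g n ≠ 0 := Nat.gcd_ne_zero_right hn0
      rw [(hp i).pow_dvd_iff_le_factorization hgcd0,
        Nat.factorization_gcd hg hn0, Finsupp.inf_apply, nfact i]
      simp only [hai, hbi]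
      omega
    -- main divisibility reduction
    have key : ∀ M : ℕ, M ≠ 0 → (n ∣ g * M ↔ ∀ i, (p i)^(a i) ∣ M) := by
      intro M hM
      constructor
      · intro h i
        have h1 : (p i)^(E i) ∣ g * M := dvd_trans (hn ▸ Finset.dvd_prod_of_mem _ (Finset.mem_univ i)) h
        rw [(hp i).pow_dvd_iff_le_factorization (mul_ne_zero hg hM),
          Nat.factorization_mul hg hM, Finsupp.add_apply] at h1
        rw [(hp i).pow_dvd_iff_le_factorization hM]
        simp only [hai, hbi]
        omega
      · intro h
        rw [← Nat.factorization_le_iff_dvd hn0 (mul_ne_zero hg hM), Finsupp.le_iff]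
        intro ℓ hℓ
        have hℓp : ℓ.Prime := Nat.prime_of_mem_primeFactors
          (by rwa [Nat.support_factorization] at hℓ)
        have hℓn : ℓ ∣ n := Nat.dvd_of_mem_primeFactors
          (by rwa [Nat.support_factorization] at hℓ)
        rw [hn] at hℓn
        rcases (hℓp.prime.dvd_finset_prod_iff _).1 hℓn with ⟨i, _, hdvd⟩
        have hℓpi : ℓ = p i :=
          (Nat.prime_dvd_prime_iff_eq hℓp (hp i)).1 (hℓp.dvd_of_dvd_pow hdvd)
        subst hℓpi
        have h2 := h i
        rw [(hp i).pow_dvd_iff_le_factorization hM] at h2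
        rw [nfact i, Nat.factorization_mul hg hM, Finsupp.add_apply]
        simp only [hai, hbi] at h2
        omega
    -- per-index criterion
    have hQ1 : ∀ j : ℕ, q ^ j + 1 ≠ 0 := fun j => by positivity
    have perI : ∀ (j : ℕ) (i : Fin s), 0 < a i →
        ((p i)^(a i) ∣ q^j + 1 ↔ (t i ∣ 2*j ∧ ¬ t i ∣ j)) := by
      intro j i hai
      haveI : NeZero ((p i)^(a i)) := ⟨pow_ne_zero _ (hp i).pos.ne'⟩
      rw [← ZMod.natCast_eq_zero_iff]
      rw [← auxB (hp i) (hpodd i) hai q j]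
      constructor
      · intro h
        push_cast at h
        linear_combination h
      · intro h
        push_cast
        linear_combination h
    -- positivity of orders on S
    have htpos : ∀ i ∈ S, 0 < t i := by
      intro i hi
      have hai : 0 < a i := (hcrit i).1 ((hmemS i).1 hi)
      haveI : NeZero ((p i)^(a i)) := ⟨pow_ne_zero _ (hp i).pos.ne'⟩
      have hcop : Nat.Coprime q ((p i)^(a i)) := (hqcop i).pow_right _
      simp only [htdef]
      rw [← ZMod.coe_unitOfCoprime q hcop, orderOf_units]
      exact orderOf_pos _
    -- chain of equivalences
    have step1 : (∃ j : ℕ, -γ = γ * (q : ZMod n)^j) ↔ ∃ j : ℕ, n ∣ g * (q^j + 1) := by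
      apply exists_congr
      intro j
      have hγcast : ((g : ℕ) : ZMod n) = γ := by
        rw [hgdef, ZMod.natCast_val, ZMod.cast_id]
      rw [← ZMod.natCast_eq_zero_iff]
      constructor
      · intro h
        push_cast [hγcast]
        linear_combination -h
      · intro h
        push_cast [hγcast] at h
        linear_combination -h
    have step2 : (∃ j : ℕ, n ∣ g * (q^j + 1)) ↔
        ∃ j : ℕ, ∀ i ∈ S, t i ∣ 2*j ∧ ¬ t i ∣ j := by
      apply exists_congr
      intro j
      rw [key _ (hQ1 j)]
      constructor
      · intro h i hi
        exact (perI j i ((hcrit i).1 ((hmemS i).1 hi))).1 (h i)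
      · intro h i
        by_cases hi : i ∈ S
        · exact (perI j i ((hcrit i).1 ((hmemS i).1 hi))).2 (h i hi)
        · have : a i = 0 := by
            have := (hmemS i).not.1 hi
            rw [hcrit i] at this
            · omega
          rw [this, pow_zero]
          exact one_dvd _
    rw [step1, step2, auxD S t htpos]
    apply exists_congr
    intro v
    apply and_congr_right
    intro _
    constructor
    · intro h i hcond
      have hi : i ∈ S := (hmemS i).2 hcond
      have hai : 0 < a i := (hcrit i).1 hcond
      rw [← auxC (hp i) (hpodd i) hai (hqcop i)]
      exact h i hi
    · intro h i hi
      have hcond := (hmemS i).1 hi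
      have hai : 0 < a i := (hcrit i).1 hcond
      simp only [htdef]
      rw [auxC (hp i) (hpodd i) hai (hqcop i)]
      exact h i hcond
end

section
/- Let q be a prime power and n coprime to q, and suppose rad(n) divides q − 1 and additionally q ≡ 1 (mod 4) whenever 8 divides n. Then for every γ ∈ (ℤ/nℤ)* the q-cyclotomic coset of γ modulo n is of equal difference: it has the form {γ, γ+d, ⋯, γ+(n/d−1)d} for some divisor d of n. -/
private lemma aux_q_pow_mod4 {q : ℕ} (h : q % 4 = 3) {j : ℕ} (hj : ¬ 2 ∣ j) :
    q ^ j % 4 = 3 := by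
  obtain ⟨m, rfl⟩ : ∃ m, j = 2 * m + 1 := ⟨j / 2, by omega⟩
  have h2 : q ^ 2 % 4 = 1 := by rw [Nat.pow_mod, h]
  calc q ^ (2 * m + 1) % 4 = ((q ^ 2) ^ m % 4) * (q % 4) % 4 := by
        rw [pow_succ, pow_mul, Nat.mul_mod]
    _ = 3 := by rw [Nat.pow_mod, h2, one_pow, h]; norm_num

private lemma aux_eight_dvd {q : ℕ} (hodd : ¬ 2 ∣ q) : 8 ∣ q ^ 2 - 1 := by
  obtain ⟨t, rfl⟩ : ∃ t, q = 2 * t + 1 := ⟨q / 2, by omega⟩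
  obtain ⟨c, hc⟩ := Nat.even_mul_succ_self t
  refine ⟨c, ?_⟩
  have h : (2 * t + 1) ^ 2 = 4 * (t * (t + 1)) + 1 := by ring
  omega

private lemma v2_pow_sub_one {q : ℕ} (hq : 2 ≤ q) (h4 : 4 ∣ q - 1) {j : ℕ} (hj : j ≠ 0) :
    padicValNat 2 (q ^ j - 1) = padicValNat 2 (q - 1) + padicValNat 2 j := by
  haveI : Fact (Nat.Prime 2) := ⟨Nat.prime_two⟩
  have hqodd : ¬ 2 ∣ q := by
    obtain ⟨k, hk⟩ := h4; omega
  have hxy : (4 : ℤ) ∣ (q : ℤ) - 1 := by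
    have : ((q - 1 : ℕ) : ℤ) = (q : ℤ) - 1 := by push_cast [Nat.cast_sub (by omega : 1 ≤ q)]; ring
    rw [← this]
    exact_mod_cast h4
  have hx : ¬ (2 : ℤ) ∣ (q : ℤ) := by exact_mod_cast hqodd
  have key := Int.two_pow_sub_pow' (x := (q : ℤ)) (y := 1) j hxy hx
  rw [one_pow] at key
  have hqj : 1 ≤ q ^ j := Nat.one_le_pow _ _ (by omega)
  have e1 : (q : ℤ) ^ j - 1 = ((q ^ j - 1 : ℕ) : ℤ) := by
    push_cast [Nat.cast_sub hqj]; ring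
  have e2 : (q : ℤ) - 1 = ((q - 1 : ℕ) : ℤ) := by
    push_cast [Nat.cast_sub (by omega : 1 ≤ q)]; ring
  rw [e1, e2] at key
  have c1 : emultiplicity ((2 : ℕ) : ℤ) ((q ^ j - 1 : ℕ) : ℤ) = emultiplicity 2 (q ^ j - 1) :=
    Int.natCast_emultiplicity 2 _
  have c2 : emultiplicity ((2 : ℕ) : ℤ) ((q - 1 : ℕ) : ℤ) = emultiplicity 2 (q - 1) :=
    Int.natCast_emultiplicity 2 _
  have c3 : emultiplicity ((2 : ℕ) : ℤ) ((j : ℕ) : ℤ) = emultiplicity 2 j :=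
    Int.natCast_emultiplicity 2 _
  have h2 : ((2 : ℕ) : ℤ) = (2 : ℤ) := by norm_num
  rw [h2] at c1 c2 c3
  rw [c1, c2, c3] at key
  have p1 : (padicValNat 2 (q ^ j - 1) : ℕ∞) = emultiplicity 2 (q ^ j - 1) :=
    padicValNat_eq_emultiplicity (by have := Nat.one_lt_pow hj (by omega : 1 < q); omega)
  have p2 : (padicValNat 2 (q - 1) : ℕ∞) = emultiplicity 2 (q - 1) :=
    padicValNat_eq_emultiplicity (by omega)
  have p3 : (padicValNat 2 j : ℕ∞) = emultiplicity 2 j :=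
    padicValNat_eq_emultiplicity hj
  have : (padicValNat 2 (q ^ j - 1) : ℕ∞) = ((padicValNat 2 (q - 1) + padicValNat 2 j : ℕ) : ℕ∞) := by
    rw [p1, key, ← p2, ← p3]; push_cast; rfl
  exact_mod_cast this

private lemma perPrime (q n : ℕ) (hq2 : 2 ≤ q) (hcop : Nat.Coprime n q)
    (hrad : ∀ p : ℕ, p.Prime → p ∣ n → p ∣ q - 1) (h8 : 8 ∣ n → q % 4 = 1)
    (hn : n ≠ 0) {j : ℕ} (hj : j ≠ 0) (p : ℕ) :
    n.factorization p ≤ (q ^ j - 1).factorization p ↔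
      (n / Nat.gcd n (q - 1)).factorization p ≤ j.factorization p := by
  by_cases hp : p.Prime
  swap
  · simp [Nat.factorization_eq_zero_of_not_prime _ hp]
  by_cases hpn : p ∣ n
  swap
  · have h1 : n.factorization p = 0 := Nat.factorization_eq_zero_of_not_dvd hpn
    have h2 : (n / Nat.gcd n (q - 1)).factorization p = 0 :=
      Nat.factorization_eq_zero_of_not_dvd
        (fun h => hpn (h.trans (Nat.div_dvd_of_dvd (Nat.gcd_dvd_left _ _))))
    simp [h1, h2]
  haveI : Fact p.Prime := ⟨hp⟩
  have hq1 : q - 1 ≠ 0 := by omega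
  have hg : Nat.gcd n (q - 1) ∣ n := Nat.gcd_dvd_left _ _
  have hXne : q ^ j - 1 ≠ 0 := by
    have := Nat.one_lt_pow hj (by omega : 1 < q); omega
  have hpq1 : p ∣ q - 1 := hrad p hp hpn
  have hpq : ¬ p ∣ q := by
    intro h
    have := (Nat.Coprime.coprime_dvd_left hpn hcop).eq_one_of_dvd h
    exact hp.one_lt.ne' this
  have hfac : (n / Nat.gcd n (q - 1)).factorization p
      = n.factorization p - min (n.factorization p) ((q - 1).factorization p) := by
    rw [Nat.factorization_div hg, Nat.factorization_gcd hn hq1]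
    simp [Finsupp.inf_apply]
  have hB1 : 1 ≤ (q - 1).factorization p :=
    Nat.Prime.factorization_pos_of_dvd hp hq1 hpq1
  rw [hfac]
  rcases hp.eq_two_or_odd' with rfl | hodd
  · -- p = 2
    have hq_odd : ¬ 2 ∣ q := hpq
    by_cases h4 : 4 ∣ q - 1
    · have hval : (q ^ j - 1).factorization 2 = (q - 1).factorization 2 + j.factorization 2 := by
        rw [Nat.factorization_def _ hp, Nat.factorization_def _ hp, Nat.factorization_def _ hp]
        exact v2_pow_sub_one hq2 h4 hj
      rw [hval]; omega
    · have hq4 : q % 4 = 3 := by omega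
      have hn8 : ¬ 8 ∣ n := fun h => by have := h8 h; omega
      have hA2 : n.factorization 2 ≤ 2 := by
        by_contra hA
        have h1 : (2 : ℕ) ^ 3 ∣ 2 ^ n.factorization 2 := pow_dvd_pow 2 (by omega)
        have := h1.trans (Nat.ordProj_dvd n 2)
        norm_num at this
        exact hn8 this
      have hB : (q - 1).factorization 2 = 1 := by
        by_contra hB
        have h1 : (2 : ℕ) ^ 2 ∣ 2 ^ (q - 1).factorization 2 := pow_dvd_pow 2 (by omega)
        have := h1.trans (Nat.ordProj_dvd (q - 1) 2)
        norm_num at this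
        exact h4 this
      by_cases hj2 : 2 ∣ j
      · have h8X : (8 : ℕ) ∣ q ^ j - 1 := by
          obtain ⟨m, rfl⟩ := hj2
          have d1 : (8 : ℕ) ∣ q ^ 2 - 1 := aux_eight_dvd hq_odd
          have d2 : q ^ 2 - 1 ∣ (q ^ 2) ^ m - 1 ^ m := Nat.sub_dvd_pow_sub_pow _ 1 m
          rw [one_pow, ← pow_mul] at d2
          exact d1.trans d2
        have hX3 : 3 ≤ (q ^ j - 1).factorization 2 := by
          rw [Nat.factorization_def _ hp, ← padicValNat_dvd_iff_le hXne]
          norm_num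
          exact h8X
        have hj1 : 1 ≤ j.factorization 2 :=
          Nat.Prime.factorization_pos_of_dvd hp hj hj2
        omega
      · have hq3 : q ^ j % 4 = 3 := aux_q_pow_mod4 hq4 hj2
        have hdvd : 2 ∣ q ^ j - 1 := by omega
        have hndvd : ¬ 4 ∣ q ^ j - 1 := by omega
        have hX1 : (q ^ j - 1).factorization 2 = 1 := by
          have hle : 1 ≤ (q ^ j - 1).factorization 2 :=
            Nat.Prime.factorization_pos_of_dvd hp hXne hdvd
          have hlt : (q ^ j - 1).factorization 2 < 2 := by
            by_contra h
            have h1 : (2 : ℕ) ^ 2 ∣ 2 ^ (q ^ j - 1).factorization 2 := pow_dvd_pow 2 (by omega)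
            have := h1.trans (Nat.ordProj_dvd (q ^ j - 1) 2)
            norm_num at this
            exact hndvd this
          omega
        have hj0 : j.factorization 2 = 0 := Nat.factorization_eq_zero_of_not_dvd hj2
        rw [hX1, hj0]; omega
  · -- p odd
    have hval : (q ^ j - 1).factorization p = (q - 1).factorization p + j.factorization p := by
      rw [Nat.factorization_def _ hp, Nat.factorization_def _ hp, Nat.factorization_def _ hp]
      have := padicValNat.pow_sub_pow (p := p) hodd (x := q) (y := 1)
        (by omega : (1 : ℕ) < q) (by simpa using hpq1) hpq hj
      simpa using this
    rw [hval]; omega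

private lemma key_dvd (q n : ℕ) (hq2 : 2 ≤ q) (hcop : Nat.Coprime n q)
    (hrad : ∀ p : ℕ, p.Prime → p ∣ n → p ∣ q - 1) (h8 : 8 ∣ n → q % 4 = 1)
    (hn : n ≠ 0) (j : ℕ) :
    n ∣ q ^ j - 1 ↔ n / Nat.gcd n (q - 1) ∣ j := by
  rcases eq_or_ne j 0 with rfl | hj
  · simp
  have hX : q ^ j - 1 ≠ 0 := by
    have := Nat.one_lt_pow hj (by omega : 1 < q); omega
  have hgpos : 0 < Nat.gcd n (q - 1) := Nat.gcd_pos_of_pos_left _ (Nat.pos_of_ne_zero hn)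
  have hd : n / Nat.gcd n (q - 1) ≠ 0 :=
    (Nat.div_pos (Nat.le_of_dvd (Nat.pos_of_ne_zero hn) (Nat.gcd_dvd_left _ _)) hgpos).ne'
  rw [← Nat.factorization_le_iff_dvd hn hX, ← Nat.factorization_le_iff_dvd hd hj,
    Finsupp.le_def, Finsupp.le_def]
  exact forall_congr' (perPrime q n hq2 hcop hrad h8 hn hj)

private lemma mult_g {n : ℕ} (g T : ℕ) (hn : n ≠ 0) (hngT : n = g * T) (hT : T ≠ 0)
    (z : ZMod n) : ∃ k : ℕ, k < T ∧ z * (g : ZMod n) = (k : ZMod n) * (g : ZMod n) := by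
  haveI : NeZero n := ⟨hn⟩
  refine ⟨z.val % T, Nat.mod_lt _ (Nat.pos_of_ne_zero hT), ?_⟩
  have h1 : ((z.val : ℕ) : ZMod n) = z := ZMod.natCast_rightInverse z
  conv_lhs => rw [← h1]
  rw [← Nat.cast_mul, ← Nat.cast_mul, ZMod.natCast_eq_natCast_iff]
  have hle : z.val % T * g ≤ z.val * g := Nat.mul_le_mul_right _ (Nat.mod_le _ _)
  refine ((Nat.modEq_iff_dvd' hle).mpr ?_).symm
  have h2 : z.val * g - z.val % T * g = (z.val - z.val % T) * g := by
    rw [Nat.sub_mul]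
  have h3 : z.val - z.val % T = T * (z.val / T) := by
    have := Nat.div_add_mod z.val T
    omega
  rw [h2, h3]
  exact (dvd_of_eq hngT).trans ⟨z.val / T, by ring⟩

/-- If `rad(n) ∣ q - 1` and moreover `q ≡ 1 (mod 4)` whenever `8 ∣ n`, then for every unit
`γ ∈ (ZMod n)ˣ` the `q`-cyclotomic coset of `γ` modulo `n` is of equal difference: with
`τ` its size and `d = n / τ`, we have `d ∣ n` and the coset equals
`{γ, γ + d, …, γ + (n/d - 1)·d}`. -/
theorem stmt18 (q n : ℕ) (hq : IsPrimePow q) (hn : 0 < n) (hcop : Nat.Coprime n q)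
    (hrad : (∏ ℓ ∈ n.primeFactors, ℓ) ∣ q - 1) (h8 : 8 ∣ n → q % 4 = 1) :
    ∀ γ : ZMod n, IsUnit γ →
      (n / cycSize q n γ) ∣ n ∧
      cycCoset q n γ =
        {x | ∃ k : ℕ, k < n / (n / cycSize q n γ) ∧
          x = γ + (k : ZMod n) * ((n / cycSize q n γ : ℕ) : ZMod n)} := by
  intro γ hγ
  haveI : NeZero n := ⟨hn.ne'⟩
  have hq2 : 2 ≤ q := hq.two_le
  have hrad' : ∀ p : ℕ, p.Prime → p ∣ n → p ∣ q - 1 := by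
    intro p hp hpn
    exact (Finset.dvd_prod_of_mem _ (Nat.mem_primeFactors.mpr ⟨hp, hpn, hn.ne'⟩)).trans hrad
  set g := Nat.gcd n (q - 1) with hgdef
  set T := n / g with hTdef
  have hgdvd : g ∣ n := Nat.gcd_dvd_left _ _
  have hgq1 : g ∣ q - 1 := Nat.gcd_dvd_right _ _
  have hgpos : 0 < g := Nat.gcd_pos_of_pos_left _ hn
  have hTpos : 0 < T := Nat.div_pos (Nat.le_of_dvd hn hgdvd) hgpos
  have hngT : n = g * T := (Nat.mul_div_cancel' hgdvd).symm
  -- characterization of powers of q being 1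
  have hord : ∀ t : ℕ, (q : ZMod n) ^ t = 1 ↔ T ∣ t := by
    intro t
    have h1 : ((q ^ t : ℕ) : ZMod n) = ((1 : ℕ) : ZMod n) ↔ n ∣ q ^ t - 1 := by
      rw [ZMod.natCast_eq_natCast_iff]
      exact ⟨fun h => (Nat.modEq_iff_dvd' (Nat.one_le_pow _ _ (by omega))).mp h.symm,
        fun h => ((Nat.modEq_iff_dvd' (Nat.one_le_pow _ _ (by omega))).mpr h).symm⟩
    have h2 : (q : ZMod n) ^ t = 1 ↔ ((q ^ t : ℕ) : ZMod n) = ((1 : ℕ) : ZMod n) := by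
      push_cast; rfl
    rw [h2, h1]
    exact key_dvd q n hq2 hcop hrad' h8 hn.ne' t
  -- cycSize = T
  have hτ : cycSize q n γ = T := by
    unfold cycSize
    have hset : {t | 0 < t ∧ γ * (q : ZMod n) ^ t = γ} = {t | 0 < t ∧ T ∣ t} := by
      ext t
      simp only [Set.mem_setOf_eq, and_congr_right_iff]
      intro _
      rw [← hord t]
      constructor
      · intro h
        exact hγ.mul_left_cancel (by rw [h, mul_one])
      · intro h
        rw [h, mul_one]
    rw [hset]
    apply le_antisymm
    · exact Nat.sInf_le ⟨hTpos, dvd_refl _⟩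
    · exact le_csInf ⟨T, hTpos, dvd_refl _⟩ (fun t ht => Nat.le_of_dvd ht.1 ht.2)
  have hd1 : n / T = g := Nat.div_div_self hgdvd hn.ne'
  rw [hτ, hd1]
  constructor
  · exact hgdvd
  -- set equality
  have hTT : n / g = T := hTdef.symm
  rw [hTT]
  have hqU : IsUnit ((q : ZMod n)) := (ZMod.isUnit_iff_coprime q n).mpr hcop.symm
  -- subset direction
  have hsub : cycCoset q n γ ⊆
      {x | ∃ k : ℕ, k < T ∧ x = γ + (k : ZMod n) * (g : ZMod n)} := by
    rintro x ⟨j, rfl⟩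
    have hdvd : g ∣ q ^ j - 1 := by
      have := Nat.sub_dvd_pow_sub_pow q 1 j
      rw [one_pow] at this
      exact hgq1.trans this
    obtain ⟨c, hc⟩ := hdvd
    have hqj : q ^ j = g * c + 1 := by
      have := Nat.one_le_pow j q (by omega)
      omega
    obtain ⟨k, hk, hkeq⟩ := mult_g g T hn.ne' hngT hTpos.ne' (γ * (c : ZMod n))
    refine ⟨k, hk, ?_⟩
    have : (q : ZMod n) ^ j = (g : ZMod n) * (c : ZMod n) + 1 := by
      have := congrArg (fun m : ℕ => (m : ZMod n)) hqj
      push_cast at this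
      exact this
    rw [this]
    rw [← hkeq]
    ring
  -- cardinalities
  have hinj1 : Set.InjOn (fun j : ℕ => γ * (q : ZMod n) ^ j) (Finset.range T : Set ℕ) := by
    have key2 : ∀ i j : ℕ, i ≤ j → j < T → γ * (q : ZMod n) ^ i = γ * (q : ZMod n) ^ j → i = j := by
      intro i j hij hjT heq
      have h1 : (q : ZMod n) ^ i = (q : ZMod n) ^ j := hγ.mul_left_cancel heq
      have h2 : (q : ZMod n) ^ j = (q : ZMod n) ^ i * (q : ZMod n) ^ (j - i) := by
        rw [← pow_add]
        congr 1
        omega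
      have h3 : (q : ZMod n) ^ (j - i) = 1 := by
        have e : (q : ZMod n) ^ i * (q : ZMod n) ^ (j - i) = (q : ZMod n) ^ i * 1 := by
          rw [mul_one, ← h2, h1]
        exact (hqU.pow i).mul_left_cancel e
      have h4 : T ∣ j - i := (hord _).mp h3
      rcases Nat.eq_zero_or_pos (j - i) with h0 | h0
      · omega
      · have := Nat.le_of_dvd h0 h4
        omega
    intro i hi j hj heq
    simp only [Finset.coe_range, Set.mem_Iio] at hi hj
    rcases le_total i j with h | h
    · exact key2 i j h hj heq
    · exact (key2 j i h hi heq.symm).symm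
  have hinj2 : Set.InjOn (fun k : ℕ => γ + (k : ZMod n) * (g : ZMod n))
      (Finset.range T : Set ℕ) := by
    intro k1 hk1 k2 hk2 heq
    simp only [Finset.coe_range, Set.mem_Iio] at hk1 hk2
    have h1 : (k1 : ZMod n) * (g : ZMod n) = (k2 : ZMod n) * (g : ZMod n) := by
      have := add_left_cancel heq
      exact this
    have h2 : ((k1 * g : ℕ) : ZMod n) = ((k2 * g : ℕ) : ZMod n) := by push_cast; exact h1
    have hlt1 : k1 * g < n := by
      calc k1 * g < T * g := by exact (Nat.mul_lt_mul_right hgpos).mpr hk1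
        _ = n := by rw [hngT]; ring
    have hlt2 : k2 * g < n := by
      calc k2 * g < T * g := by exact (Nat.mul_lt_mul_right hgpos).mpr hk2
        _ = n := by rw [hngT]; ring
    have := congrArg ZMod.val h2
    rw [ZMod.val_cast_of_lt hlt1, ZMod.val_cast_of_lt hlt2] at this
    exact Nat.eq_of_mul_eq_mul_right hgpos this
  have hRfin : {x : ZMod n | ∃ k : ℕ, k < T ∧ x = γ + (k : ZMod n) * (g : ZMod n)}
      = ((Finset.range T).image (fun k : ℕ => γ + (k : ZMod n) * (g : ZMod n)) : Set (ZMod n)) := by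
    ext x
    simp [eq_comm]
  have hcard2 : {x : ZMod n | ∃ k : ℕ, k < T ∧ x = γ + (k : ZMod n) * (g : ZMod n)}.ncard = T := by
    rw [hRfin, Set.ncard_coe_finset, Finset.card_image_of_injOn hinj2, Finset.card_range]
  have hsub1 : ((Finset.range T).image (fun j : ℕ => γ * (q : ZMod n) ^ j) : Set (ZMod n))
      ⊆ cycCoset q n γ := by
    intro x hx
    simp only [Finset.coe_image, Set.mem_image, Finset.coe_range, Set.mem_Iio] at hx
    obtain ⟨j, _, rfl⟩ := hx
    exact ⟨j, rfl⟩
  have hcard1 : T ≤ (cycCoset q n γ).ncard := by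
    have h1 : ((Finset.range T).image (fun j : ℕ => γ * (q : ZMod n) ^ j) : Set (ZMod n)).ncard
        = T := by
      rw [Set.ncard_coe_finset, Finset.card_image_of_injOn hinj1, Finset.card_range]
    rw [← h1]
    exact Set.ncard_le_ncard hsub1 (Set.toFinite _)
  refine Set.eq_of_subset_of_ncard_le hsub ?_ (Set.toFinite _)
  rw [hcard2]
  exact hcard1
end
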